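/- arXiv:math-ph/0204044 — 8 statements merged into one kernel-verified Lean document; each statement's English description precedes it below -/
import Mathlib

section
/- For every ε > 0 and K > 0 there exists a constant C > 0, depending only on ε and K, with the following property: for any probability space and any two square-integrable real-valued random variables W₁, W₂ with E(W₁² + W₂²) ≤ K, and for every real number x ≥ 1, one has E[(log(x·e^{W₁} + e^{W₂}))²] ≤ (log x)² + 2(ε + E[W₁])·log x + C. -/
open MeasureTheory

lemma aux_logZ_nonneg (u : ℝ) : 0 ≤ Real.log (1 + Real.exp u) :=
  Real.log_nonneg (by nlinarith [Real.exp_pos u])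

lemma aux_logZ_le (u : ℝ) : Real.log (1 + Real.exp u) ≤ Real.log 2 + |u| := by
  rcases le_or_gt u 0 with h | h
  · have h1 : (1:ℝ) + Real.exp u ≤ 2 := by nlinarith [Real.exp_le_one_iff.2 h]
    have := Real.log_le_log (by positivity) h1
    have := abs_nonneg u
    linarith
  · have h1 : (1:ℝ) + Real.exp u ≤ 2 * Real.exp u := by nlinarith [Real.one_le_exp h.le]
    have h2 : Real.log (1 + Real.exp u) ≤ Real.log (2 * Real.exp u) :=
      Real.log_le_log (by positivity) h1
    rw [Real.log_mul two_ne_zero (Real.exp_ne_zero u), Real.log_exp] at h2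
    rw [abs_of_pos h]
    linarith

lemma aux_tZ_le (t u : ℝ) (ht : 0 ≤ t) :
    t * Real.log (1 + Real.exp (u - t)) ≤ 1 + (Real.log 2)^2 + 3 * u^2 := by
  have hL : (0:ℝ) < Real.log 2 := Real.log_pos one_lt_two
  rcases le_or_gt u (t/2) with h | h
  · have hmono : Real.log (1 + Real.exp (u - t)) ≤ Real.log (1 + Real.exp (-(t/2))) := by
      apply Real.log_le_log (by positivity)
      have : u - t ≤ -(t/2) := by linarith
      nlinarith [Real.exp_le_exp.2 this]
    have hlog : Real.log (1 + Real.exp (-(t/2))) ≤ Real.exp (-(t/2)) := by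
      have := Real.log_le_sub_one_of_pos (show (0:ℝ) < 1 + Real.exp (-(t/2)) by positivity)
      linarith
    have hkey : t ≤ Real.exp (t/2) := by
      have h4 := Real.add_one_le_exp (t/4)
      have hsq : Real.exp (t/2) = Real.exp (t/4) * Real.exp (t/4) := by
        rw [← Real.exp_add]; ring_nf
      nlinarith [Real.exp_pos (t/4), sq_nonneg (t/4 - 1)]
    have h1 : t * Real.exp (-(t/2)) ≤ 1 := by
      have := mul_le_mul_of_nonneg_right hkey (Real.exp_pos (-(t/2))).le
      have heq : Real.exp (t/2) * Real.exp (-(t/2)) = 1 := by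
        rw [← Real.exp_add]; simp
      linarith
    have := mul_le_mul_of_nonneg_left (hmono.trans hlog) ht
    nlinarith [sq_nonneg u]
  · have hu : 0 < u := by linarith
    have hz1 : Real.log (1 + Real.exp (u - t)) ≤ Real.log 2 + u := by
      have hmono : Real.log (1 + Real.exp (u - t)) ≤ Real.log (1 + Real.exp u) := by
        apply Real.log_le_log (by positivity)
        have : u - t ≤ u := by linarith
        nlinarith [Real.exp_le_exp.2 this]
      have := aux_logZ_le u
      rw [abs_of_pos hu] at this
      linarith
    have hz0 := aux_logZ_nonneg (u - t)
    have ht2 : t ≤ 2 * u := by linarith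
    nlinarith [sq_nonneg (u - Real.log 2)]

lemma aux_pointwise (t a b : ℝ) (ht : 0 ≤ t) :
    (Real.log (Real.exp t * Real.exp a + Real.exp b))^2 ≤
      t^2 + 2*t*a + (2 + 6*(Real.log 2)^2 + 22*a^2 + 20*b^2) := by
  have hfac : Real.exp t * Real.exp a + Real.exp b
      = Real.exp (t + a) * (1 + Real.exp (b - a - t)) := by
    rw [mul_add, mul_one, ← Real.exp_add, ← Real.exp_add]
    ring_nf
  set z := Real.log (1 + Real.exp (b - a - t)) with hz
  have hlog : Real.log (Real.exp t * Real.exp a + Real.exp b) = (t + a) + z := by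
    rw [hfac, Real.log_mul (Real.exp_ne_zero _)
      (by positivity : (1:ℝ) + Real.exp (b - a - t) ≠ 0), Real.log_exp]
  rw [hlog]
  have h1 : 0 ≤ z := aux_logZ_nonneg _
  have h2 : t * z ≤ 1 + (Real.log 2)^2 + 3 * (b - a)^2 := by
    have := aux_tZ_le t (b - a) ht
    rw [show b - a - t = (b - a) - t by ring] at hz
    rw [hz]; exact this
  have h3 : z ≤ Real.log 2 + |b - a| := by
    have hmono : z ≤ Real.log (1 + Real.exp (b - a)) := by
      apply Real.log_le_log (by positivity)
      have : b - a - t ≤ b - a := by linarith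
      nlinarith [Real.exp_le_exp.2 this]
    exact hmono.trans (aux_logZ_le _)
  have habs : |b - a|^2 = (b - a)^2 := sq_abs _
  have habs0 : 0 ≤ |b - a| := abs_nonneg _
  have hL : (0:ℝ) < Real.log 2 := Real.log_pos one_lt_two
  have hz2 : z^2 ≤ 2*(Real.log 2)^2 + 2*(b - a)^2 := by
    nlinarith [mul_le_mul h3 h3 h1 (by linarith : (0:ℝ) ≤ Real.log 2 + |b - a|),
      sq_nonneg (|b - a| - Real.log 2)]
  nlinarith [h2, hz2, sq_nonneg (a - z), sq_nonneg (a + b)]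

/-- Lemma 6.2: for every `ε > 0` and `K > 0` there is a constant `C > 0` such that for any
two square-integrable random variables `W₁, W₂` with `E(W₁² + W₂²) ≤ K` and every `x ≥ 1`,
`E[(log(x e^{W₁} + e^{W₂}))²] ≤ (log x)² + 2(ε + E W₁) log x + C`. -/
theorem stmt0 :
    ∀ ε > (0:ℝ), ∀ K > (0:ℝ), ∃ C > (0:ℝ),
      ∀ (Ω : Type) [inst : MeasurableSpace Ω] (P : Measure Ω), IsProbabilityMeasure P →
      ∀ (W₁ W₂ : Ω → ℝ), Measurable W₁ → Measurable W₂ →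
        Integrable (fun ω => (W₁ ω)^2) P → Integrable (fun ω => (W₂ ω)^2) P →
        (∫ ω, ((W₁ ω)^2 + (W₂ ω)^2) ∂P) ≤ K →
        ∀ x : ℝ, 1 ≤ x →
          (∫ ω, (Real.log (x * Real.exp (W₁ ω) + Real.exp (W₂ ω)))^2 ∂P)
            ≤ (Real.log x)^2 + 2 * (ε + ∫ ω, W₁ ω ∂P) * Real.log x + C := by
  intro ε hε K hK
  refine ⟨2 + 6*(Real.log 2)^2 + 22*K, by positivity, ?_⟩
  intro Ω inst P hP W₁ W₂ hm1 hm2 hi1 hi2 hsum x hx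
  set t := Real.log x with ht_def
  have ht : 0 ≤ t := Real.log_nonneg hx
  have hx0 : (0:ℝ) < x := lt_of_lt_of_le zero_lt_one hx
  have hxe : x = Real.exp t := (Real.exp_log hx0).symm
  -- integrability of W₁
  have hiW1 : Integrable W₁ P := by
    refine Integrable.mono' ((integrable_const (1:ℝ)).add hi1) hm1.aestronglyMeasurable
      (Filter.Eventually.of_forall fun ω => ?_)
    rw [Real.norm_eq_abs]
    simp only [Pi.add_apply]
    nlinarith [sq_abs (W₁ ω), abs_nonneg (W₁ ω), sq_nonneg (|W₁ ω| - 1)]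
  -- the dominating function
  have hg : Integrable (fun ω => t^2 + 2*t*(W₁ ω)
      + (2 + 6*(Real.log 2)^2 + 22*(W₁ ω)^2 + 20*(W₂ ω)^2)) P := by
    refine Integrable.add (Integrable.add (integrable_const _) (hiW1.const_mul (2*t))) ?_
    exact Integrable.add (Integrable.add (integrable_const _) (hi1.const_mul 22))
      (hi2.const_mul 20)
  have hmono : (∫ ω, (Real.log (x * Real.exp (W₁ ω) + Real.exp (W₂ ω)))^2 ∂P)
      ≤ ∫ ω, (t^2 + 2*t*(W₁ ω)
        + (2 + 6*(Real.log 2)^2 + 22*(W₁ ω)^2 + 20*(W₂ ω)^2)) ∂P := by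
    refine integral_mono_of_nonneg (Filter.Eventually.of_forall fun ω => sq_nonneg _) hg
      (Filter.Eventually.of_forall fun ω => ?_)
    simpa using (by rw [hxe]; exact aux_pointwise t (W₁ ω) (W₂ ω) ht)
  have hA : Integrable (fun ω => t^2 + 2*t*(W₁ ω)) P :=
    (integrable_const _).add (hiW1.const_mul _)
  have hB1 : Integrable (fun ω => 2 + 6*(Real.log 2)^2 + 22*(W₁ ω)^2) P :=
    (integrable_const _).add (hi1.const_mul _)
  have e1 : (∫ ω, (t^2 + 2*t*(W₁ ω)
        + (2 + 6*(Real.log 2)^2 + 22*(W₁ ω)^2 + 20*(W₂ ω)^2)) ∂P)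
      = (∫ ω, (t^2 + 2*t*(W₁ ω)) ∂P)
        + ∫ ω, (2 + 6*(Real.log 2)^2 + 22*(W₁ ω)^2 + 20*(W₂ ω)^2) ∂P :=
    integral_add hA (hB1.add (hi2.const_mul _))
  have e2 : (∫ ω, (t^2 + 2*t*(W₁ ω)) ∂P)
      = (∫ _ω, (t^2 : ℝ) ∂P) + ∫ ω, 2*t*(W₁ ω) ∂P :=
    integral_add (integrable_const _) (hiW1.const_mul _)
  have e3 : (∫ ω, (2 + 6*(Real.log 2)^2 + 22*(W₁ ω)^2 + 20*(W₂ ω)^2) ∂P)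
      = (∫ ω, (2 + 6*(Real.log 2)^2 + 22*(W₁ ω)^2) ∂P) + ∫ ω, 20*(W₂ ω)^2 ∂P :=
    integral_add hB1 (hi2.const_mul _)
  have e4 : (∫ ω, (2 + 6*(Real.log 2)^2 + 22*(W₁ ω)^2) ∂P)
      = (∫ _ω, (2 + 6*(Real.log 2)^2 : ℝ) ∂P) + ∫ ω, 22*(W₁ ω)^2 ∂P :=
    integral_add (integrable_const _) (hi1.const_mul _)
  have ec1 : (∫ _ω, (t^2 : ℝ) ∂P) = t^2 := by simp
  have ec2 : (∫ _ω, (2 + 6*(Real.log 2)^2 : ℝ) ∂P) = 2 + 6*(Real.log 2)^2 := by simp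
  have em1 : (∫ ω, 2*t*(W₁ ω) ∂P) = 2*t*∫ ω, W₁ ω ∂P := integral_const_mul _ _
  have em2 : (∫ ω, 22*(W₁ ω)^2 ∂P) = 22*∫ ω, (W₁ ω)^2 ∂P := integral_const_mul _ _
  have em3 : (∫ ω, 20*(W₂ ω)^2 ∂P) = 20*∫ ω, (W₂ ω)^2 ∂P := integral_const_mul _ _
  have hsum' : (∫ ω, (W₁ ω)^2 ∂P) + (∫ ω, (W₂ ω)^2 ∂P) ≤ K := by
    rw [← integral_add hi1 hi2]; exact hsum
  have h1nn : 0 ≤ ∫ ω, (W₁ ω)^2 ∂P := integral_nonneg fun ω => sq_nonneg _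
  have h2nn : 0 ≤ ∫ ω, (W₂ ω)^2 ∂P := integral_nonneg fun ω => sq_nonneg _
  have hεt : 0 ≤ 2 * ε * t := by positivity
  rw [e1, e2, e3, e4, ec1, ec2, em1, em2, em3] at hmono
  nlinarith [hmono, hsum', h1nn, h2nn, hεt]
end

section
/- Let K > 0 and let W₁, W₂ be square-integrable real-valued random variables on a probability space with E(W₁² + W₂²) ≤ K. Then for every real number x ≥ 1 one has E[(W₁ + log(1 + e^{W₂ − W₁}/x))²] ≤ 6K + 2. -/
open MeasureTheory

lemma pointwise_bound (w1 w2 x : ℝ) (hx : 1 ≤ x) :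
    (w1 + Real.log (1 + Real.exp (w2 - w1) / x))^2
      ≤ 3 * (Real.log 2)^2 + 3 * w1^2 + 3 * w2^2 := by
  have hx0 : 0 < x := lt_of_lt_of_le one_pos hx
  have he : 0 < Real.exp (w2 - w1) := Real.exp_pos _
  set t := Real.log (1 + Real.exp (w2 - w1) / x) with ht_def
  have h1 : (0:ℝ) < 1 + Real.exp (w2 - w1) / x := by positivity
  have ht0 : 0 ≤ t := Real.log_nonneg (by
    have : 0 ≤ Real.exp (w2 - w1) / x := by positivity
    linarith)
  have habs : |w2 - w1| ≤ |w1| + |w2| := by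
    calc |w2 - w1| ≤ |w2| + |w1| := abs_sub _ _
    _ = |w1| + |w2| := by ring
  have ht : t ≤ Real.log 2 + max 0 (w2 - w1) := by
    have h2 : 1 + Real.exp (w2 - w1) / x ≤ 2 * Real.exp (max 0 (w2 - w1)) := by
      have hd : Real.exp (w2 - w1) / x ≤ Real.exp (w2 - w1) :=
        div_le_self he.le hx
      have h3 : Real.exp (w2 - w1) ≤ Real.exp (max 0 (w2 - w1)) :=
        Real.exp_le_exp.2 (le_max_right _ _)
      have h4 : (1:ℝ) ≤ Real.exp (max 0 (w2 - w1)) :=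
        Real.one_le_exp (le_max_left _ _)
      linarith
    calc t ≤ Real.log (2 * Real.exp (max 0 (w2 - w1))) := Real.log_le_log h1 h2
    _ = Real.log 2 + max 0 (w2 - w1) := by
        rw [Real.log_mul (by norm_num) (Real.exp_ne_zero _), Real.log_exp]
  have hlog2 : 0 ≤ Real.log 2 := Real.log_nonneg (by norm_num)
  have hw1 : |w1| ^ 2 = w1 ^ 2 := sq_abs _
  have hw2 : |w2| ^ 2 = w2 ^ 2 := sq_abs _
  have ha1 : -(Real.log 2 + |w1| + |w2|) ≤ w1 + t := by
    have := neg_abs_le w1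
    have := abs_nonneg w2
    linarith
  have ha2 : w1 + t ≤ Real.log 2 + |w1| + |w2| := by
    rcases le_total (w2 - w1) 0 with h | h
    · rw [max_eq_left h] at ht
      have := le_abs_self w1
      have := abs_nonneg w2
      linarith
    · rw [max_eq_right h] at ht
      have := le_abs_self w2
      have := abs_nonneg w1
      linarith
  have hsq : (w1 + t)^2 ≤ (Real.log 2 + |w1| + |w2|)^2 := sq_le_sq' ha1 ha2
  nlinarith [sq_nonneg (Real.log 2 - |w1|), sq_nonneg (Real.log 2 - |w2|),
    sq_nonneg (|w1| - |w2|)]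

/-- Intermediate bound in the proof of Lemma 6.2: if `E(W₁² + W₂²) ≤ K` then for every `x ≥ 1`,
`E[(W₁ + log(1 + e^{W₂ - W₁}/x))²] ≤ 6K + 2`. -/
theorem stmt2 {Ω : Type*} [MeasurableSpace Ω] (P : Measure Ω) [IsProbabilityMeasure P]
    (K : ℝ) (hK : 0 < K) (W₁ W₂ : Ω → ℝ)
    (hm₁ : Measurable W₁) (hm₂ : Measurable W₂)
    (hi₁ : Integrable (fun ω => (W₁ ω)^2) P) (hi₂ : Integrable (fun ω => (W₂ ω)^2) P)
    (hK2 : (∫ ω, ((W₁ ω)^2 + (W₂ ω)^2) ∂P) ≤ K)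
    (x : ℝ) (hx : 1 ≤ x) :
    (∫ ω, (W₁ ω + Real.log (1 + Real.exp (W₂ ω - W₁ ω) / x))^2 ∂P) ≤ 6 * K + 2 := by
  have hgint : Integrable
      (fun ω => 3 * (Real.log 2)^2 + 3 * (W₁ ω)^2 + 3 * (W₂ ω)^2) P := by
    apply Integrable.add
    · exact (integrable_const _).add (hi₁.const_mul 3)
    · exact hi₂.const_mul 3
  have hmono : (∫ ω, (W₁ ω + Real.log (1 + Real.exp (W₂ ω - W₁ ω) / x))^2 ∂P)
      ≤ ∫ ω, (3 * (Real.log 2)^2 + 3 * (W₁ ω)^2 + 3 * (W₂ ω)^2) ∂P := by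
    apply integral_mono_of_nonneg
    · exact Filter.Eventually.of_forall fun ω => sq_nonneg _
    · exact hgint
    · exact Filter.Eventually.of_forall fun ω => pointwise_bound _ _ _ hx
  have hrhs : (∫ ω, (3 * (Real.log 2)^2 + 3 * (W₁ ω)^2 + 3 * (W₂ ω)^2) ∂P)
      ≤ 6 * K + 2 := by
    have hc : Integrable (fun _ : Ω => 3 * (Real.log 2)^2) P := integrable_const _
    have h1 : Integrable (fun ω => 3 * (W₁ ω)^2) P := hi₁.const_mul 3
    have h2 : Integrable (fun ω => 3 * (W₂ ω)^2) P := hi₂.const_mul 3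
    have heq : (∫ ω, (3 * (Real.log 2)^2 + 3 * (W₁ ω)^2 + 3 * (W₂ ω)^2) ∂P)
        = 3 * (Real.log 2)^2 + 3 * ∫ ω, ((W₁ ω)^2 + (W₂ ω)^2) ∂P := by
      have hca : Integrable (fun ω => 3 * (Real.log 2)^2 + 3 * (W₁ ω)^2) P := hc.add h1
      rw [integral_add hca h2, integral_add hc h1,
        integral_const, integral_const_mul, integral_const_mul,
        integral_add hi₁ hi₂]
      simp [measure_univ]
      ring
    rw [heq]
    have hlog : Real.log 2 < 0.6931471808 := Real.log_two_lt_d9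
    have hlog0 : 0 ≤ Real.log 2 := Real.log_nonneg (by norm_num)
    nlinarith
  linarith
end

section
/- Let n* ≥ 1 be an integer and define ψ : {1, 2, 3, ...} → ℝ by ψ_n = 2 if n ≤ 2n* and ψ_n = 0 if n > 2n*. Then Σ_{m=1}^∞ Σ_{k=m+1}^∞ (ψ_{k+m} − ψ_{k−m})² / (k² m²) ≤ 4π² / (3 n*). -/
open Real

/-- tail of `1/k^2` beyond `N` -/
noncomputable def gN (N : ℕ) (k : ℕ) : ℝ := if N < k then 1 / (k:ℝ)^2 else 0

lemma gN_nonneg (N k : ℕ) : 0 ≤ gN N k := by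
  unfold gN; split <;> positivity

lemma gN_summable (N : ℕ) : Summable (gN N) := by
  refine (Real.summable_one_div_nat_pow.2 one_lt_two).of_nonneg_of_le (gN_nonneg N) ?_
  intro k; unfold gN; split
  · exact le_rfl
  · positivity

lemma gN_partial (N : ℕ) (hN : 1 ≤ N) (n : ℕ) :
    ∑ k ∈ Finset.range (n+1), gN N k ≤ 1/(N:ℝ) - 1/(max N n : ℕ) := by
  induction n with
  | zero =>
    simp [gN, Finset.sum_range_one, Nat.not_lt_zero]
  | succ n ih =>
    rw [Finset.sum_range_succ]
    by_cases h : N < n + 1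
    · have hn : N ≤ n := Nat.lt_succ_iff.mp h
      have hmax : max N n = n := Nat.max_eq_right hn
      have hmax' : max N (n+1) = n + 1 := Nat.max_eq_right (Nat.le_succ_of_le hn)
      have hn1 : 1 ≤ n := le_trans hN hn
      have hpos : (0:ℝ) < n := by exact_mod_cast hn1
      have key : gN N (n+1) ≤ 1/(n:ℝ) - 1/((n:ℝ)+1) := by
        unfold gN; rw [if_pos h]
        push_cast
        rw [div_sub_div _ _ (ne_of_gt hpos) (by positivity),
          div_le_div_iff₀ (by positivity) (by positivity)]
        nlinarith [hpos]
      calc ∑ k ∈ Finset.range (n+1), gN N k + gN N (n+1)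
          ≤ (1/(N:ℝ) - 1/(max N n : ℕ)) + (1/(n:ℝ) - 1/((n:ℝ)+1)) := add_le_add ih key
        _ = 1/(N:ℝ) - 1/(max N (n+1) : ℕ) := by
            rw [hmax, hmax']; push_cast; ring
    · have hmax : max N n = N := Nat.max_eq_left (by omega)
      have hmax' : max N (n+1) = N := Nat.max_eq_left (by omega)
      rw [hmax] at ih
      rw [hmax']
      have hz : gN N (n+1) = 0 := by unfold gN; rw [if_neg h]
      rw [hz, add_zero]; exact ih

lemma gN_tsum (N : ℕ) (hN : 1 ≤ N) : ∑' k, gN N k ≤ 1/(N:ℝ) := by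
  apply Summable.tsum_le_of_sum_range_le (gN_summable N)
  intro n
  cases n with
  | zero => simp
  | succ n =>
    refine le_trans (gN_partial N hN n) ?_
    have : (0:ℝ) ≤ 1/(max N n : ℕ) := by positivity
    linarith

/-- shifted tail sum bound -/
lemma gN_shift (N a : ℕ) (hN : 1 ≤ N) : ∑' j, gN N (a + j) ≤ 1/(N:ℝ) := by
  refine le_trans ?_ (gN_tsum N hN)
  refine Summable.tsum_le_tsum_of_inj (fun j => a + j) (add_right_injective a)
    (fun c _ => gN_nonneg N c) (fun j => le_rfl) ?_ (gN_summable N)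
  exact ((summable_nat_add_iff a).2 (gN_summable N)).congr (fun j => by rw [Nat.add_comm])

lemma gN_shift_summable (N a : ℕ) : Summable (fun j => gN N (a + j)) :=
  ((summable_nat_add_iff a).2 (gN_summable N)).congr (fun j => by rw [Nat.add_comm])

lemma basel_partial (n : ℕ) :
    ∑ m ∈ Finset.range n, 1/((m+1:ℕ):ℝ)^2 ≤ 2 - 2/((n:ℝ)+1) := by
  induction n with
  | zero => norm_num
  | succ n ih =>
    rw [Finset.sum_range_succ]
    have h1 : (0:ℝ) < (n:ℝ)+1 := by positivity
    have h2 : (0:ℝ) < (n:ℝ)+1+1 := by positivity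
    have key : 1/((n:ℝ)+1)^2 ≤ 2/((n:ℝ)+1) - 2/((n:ℝ)+1+1) := by
      rw [div_sub_div _ _ h1.ne' h2.ne',
        div_le_div_iff₀ (by positivity) (by positivity)]
      nlinarith
    have hc : ((n+1:ℕ):ℝ) = (n:ℝ)+1 := by push_cast; ring
    rw [hc]
    linarith

lemma basel_le_two : ∑' m : ℕ, 1/((m+1:ℕ):ℝ)^2 ≤ 2 := by
  apply Real.tsum_le_of_sum_range_le (fun m => by positivity)
  intro n
  refine le_trans (basel_partial n) ?_
  have : (0:ℝ) ≤ 2/((n:ℝ)+1) := by positivity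
  linarith

lemma basel_summable : Summable (fun m : ℕ => 1/((m+1:ℕ):ℝ)^2) := by
  apply summable_of_sum_range_le (c := 2) (fun m => by positivity)
  intro n
  refine le_trans (basel_partial n) ?_
  have : (0:ℝ) ≤ 2/((n:ℝ)+1) := by positivity
  linarith

/-- Estimate of `Γ` in the proof of Proposition 5.1: with `ψ_n = 2` for `n ≤ 2n*` and `ψ_n = 0`
for `n > 2n*`, one has `∑_{m=1}^∞ ∑_{k=m+1}^∞ (ψ_{k+m} - ψ_{k-m})² / (k² m²) ≤ 4π²/(3 n*)`.
Here the outer sum index is `m+1` and the inner one is `k = m+2+j`, so that the double sum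
ranges over all integers `k > m ≥ 1`. -/
theorem stmt4 (nstar : ℕ) (hn : 1 ≤ nstar) (ψ : ℕ → ℝ)
    (hψ : ∀ n, ψ n = if n ≤ 2 * nstar then 2 else 0) :
    ∑' (m : ℕ), ∑' (j : ℕ),
        (ψ ((m + 2 + j) + (m + 1)) - ψ ((m + 2 + j) - (m + 1)))^2
          / (((m + 2 + j : ℕ) : ℝ)^2 * ((m + 1 : ℕ) : ℝ)^2)
      ≤ 4 * π^2 / (3 * nstar) := by
  have hNpos : (0:ℝ) < nstar := by exact_mod_cast hn
  set f : ℕ → ℕ → ℝ := fun m j =>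
    (ψ ((m + 2 + j) + (m + 1)) - ψ ((m + 2 + j) - (m + 1)))^2
      / (((m + 2 + j : ℕ) : ℝ)^2 * ((m + 1 : ℕ) : ℝ)^2) with hf
  have hfnn : ∀ m j, 0 ≤ f m j := by
    intro m j; rw [hf]; positivity
  -- pointwise bound
  have hptwise : ∀ m j, f m j ≤ 4 / ((m+1:ℕ):ℝ)^2 * gN nstar (m + 2 + j) := by
    intro m j
    have hsub : (m + 2 + j) - (m + 1) = j + 1 := by omega
    have hrhs : (0:ℝ) ≤ 4 / ((m+1:ℕ):ℝ)^2 * gN nstar (m + 2 + j) :=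
      mul_nonneg (by positivity) (gN_nonneg _ _)
    rw [hf]
    simp only [hsub, hψ]
    by_cases h1 : (m + 2 + j) + (m + 1) ≤ 2 * nstar
    · have h2 : j + 1 ≤ 2 * nstar := by omega
      rw [if_pos h1, if_pos h2, sub_self, zero_pow (by norm_num), zero_div]
      exact hrhs
    · by_cases h2 : j + 1 ≤ 2 * nstar
      · rw [if_neg h1, if_pos h2]
        have hk : nstar < m + 2 + j := by omega
        unfold gN; rw [if_pos hk]
        apply le_of_eq
        have hk0 : ((m+2+j:ℕ):ℝ) ≠ 0 := by positivity
        have hm0 : ((m+1:ℕ):ℝ) ≠ 0 := by positivity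
        field_simp
        ring
      · rw [if_neg h1, if_neg h2, sub_self, zero_pow (by norm_num), zero_div]
        exact hrhs
  have hsumg : ∀ m : ℕ, Summable (fun j => 4 / ((m+1:ℕ):ℝ)^2 * gN nstar (m + 2 + j)) :=
    fun m => (gN_shift_summable nstar (m+2)).mul_left _
  have hsumf : ∀ m, Summable (f m) :=
    fun m => Summable.of_nonneg_of_le (hfnn m) (hptwise m) (hsumg m)
  set h : ℕ → ℝ := fun m => 1/((m+1:ℕ):ℝ)^2 * (4/(nstar:ℝ)) with hh
  have hinner : ∀ m, ∑' j, f m j ≤ h m := by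
    intro m
    calc ∑' j, f m j ≤ ∑' j, 4 / ((m+1:ℕ):ℝ)^2 * gN nstar (m + 2 + j) :=
          Summable.tsum_le_tsum (hptwise m) (hsumf m) (hsumg m)
      _ = 4 / ((m+1:ℕ):ℝ)^2 * ∑' j, gN nstar (m + 2 + j) := tsum_mul_left
      _ ≤ 4 / ((m+1:ℕ):ℝ)^2 * (1/(nstar:ℝ)) :=
          mul_le_mul_of_nonneg_left (gN_shift nstar (m+2) hn) (by positivity)
      _ = h m := by rw [hh]; ring
  have hsumh : Summable h := basel_summable.mul_right _
  have houter : ∑' m, ∑' j, f m j ≤ ∑' m, h m :=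
    Summable.tsum_le_tsum hinner
      (Summable.of_nonneg_of_le (fun m => tsum_nonneg (hfnn m)) hinner hsumh) hsumh
  have hhsum : ∑' m, h m ≤ 8 / (nstar:ℝ) := by
    rw [hh]
    rw [tsum_mul_right]
    have h4 : (0:ℝ) ≤ 4/(nstar:ℝ) := by positivity
    calc (∑' m : ℕ, 1/((m+1:ℕ):ℝ)^2) * (4/(nstar:ℝ)) ≤ 2 * (4/(nstar:ℝ)) :=
          mul_le_mul_of_nonneg_right basel_le_two h4
      _ = 8 / (nstar:ℝ) := by ring
  refine le_trans houter (le_trans hhsum ?_)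
  have hπ := Real.pi_gt_three
  rw [div_le_div_iff₀ (by positivity) (by positivity)]
  have hp2 : 9 ≤ π^2 := by nlinarith
  nlinarith [mul_le_mul_of_nonneg_right hp2 hNpos.le]
end

section
/- For every c > 0 there exists a constant C > 0 such that for all t ∈ (0, 1]: Σ_{k=1}^∞ k^{−5/4} (1 − e^{−c k⁴ t}) ≤ C · t^{1/16}. -/
private lemma key_ineq {a : ℝ} (ha : 1 ≤ a) :
    (a + 1) ^ (-(5:ℝ)/4) ≤ 6 * (a ^ (-(1:ℝ)/4) - (a + 1) ^ (-(1:ℝ)/4)) := by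
  have ha0 : (0:ℝ) < a := lt_of_lt_of_le one_pos ha
  have hb0 : (0:ℝ) < a + 1 := by linarith
  set s := a ^ ((1:ℝ)/4) with hs_def
  set w := (a + 1) ^ ((1:ℝ)/4) with hw_def
  have hs0 : 0 < s := Real.rpow_pos_of_pos ha0 _
  have hw0 : 0 < w := Real.rpow_pos_of_pos hb0 _
  have hs1 : 1 ≤ s := Real.one_le_rpow ha (by norm_num)
  have hs4 : s ^ 4 = a := by
    rw [hs_def, ← Real.rpow_natCast (a ^ ((1:ℝ)/4)) 4, ← Real.rpow_mul ha0.le]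
    norm_num
  have hw4 : w ^ 4 = a + 1 := by
    rw [hw_def, ← Real.rpow_natCast ((a+1) ^ ((1:ℝ)/4)) 4, ← Real.rpow_mul hb0.le]
    norm_num
  have hx0 : (0:ℝ) ≤ s + 1/(6*s^3) := by positivity
  have hcore : s + 1/(6*s^3) ≤ w := by
    have hv : (1:ℝ) ≤ s ^ 4 := one_le_pow₀ hs1
    have h4 : (s + 1/(6*s^3)) ^ 4 ≤ a + 1 := by
      rw [← hs4]
      have h1 : s + 1/(6*s^3) = (6*s^4+1)/(6*s^3) := by field_simp
      rw [h1, div_pow, div_le_iff₀ (by positivity)]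
      nlinarith [hv, sq_nonneg (s^4), sq_nonneg (s^4 - 1), mul_nonneg (sub_nonneg.2 hv) (sq_nonneg (s^4)), mul_nonneg (sub_nonneg.2 hv) (sub_nonneg.2 hv)]
    have h5 := Real.rpow_le_rpow (pow_nonneg hx0 4) h4 (by norm_num : (0:ℝ) ≤ 1/4)
    rwa [← Real.rpow_natCast (s + 1/(6*s^3)) 4, ← Real.rpow_mul hx0, (by norm_num : ((4:ℕ):ℝ) * (1/4) = 1), Real.rpow_one] at h5
  have hws : s ≤ w := le_trans (le_add_of_nonneg_right (by positivity)) hcore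
  have ha14 : a ^ (-(1:ℝ)/4) = s⁻¹ := by
    rw [hs_def, ← Real.rpow_neg ha0.le]; norm_num
  have hb14 : (a + 1) ^ (-(1:ℝ)/4) = w⁻¹ := by
    rw [hw_def, ← Real.rpow_neg hb0.le]; norm_num
  have hb54 : (a + 1) ^ (-(5:ℝ)/4) = (w^5)⁻¹ := by
    rw [hw_def, ← Real.rpow_natCast ((a+1) ^ ((1:ℝ)/4)) 5, ← Real.rpow_mul hb0.le, ← Real.rpow_neg hb0.le]
    norm_num
  rw [ha14, hb14, hb54]
  have h9 : (1:ℝ) ≤ 6*s^3*(w-s) := by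
    have h10 : (1/(6*s^3)) * (6*s^3) ≤ (w - s) * (6*s^3) :=
      mul_le_mul_of_nonneg_right (by linarith) (by positivity)
    have h11 : (1/(6*s^3)) * (6*s^3) = 1 := by field_simp
    linarith [h10, h11.symm.le]
  have hs4w : s^4 ≤ w^4 := by rw [hs4, hw4]; linarith
  have heq : 6 * (s⁻¹ - w⁻¹) - (w^5)⁻¹ = (6*w^5 - 6*s*w^4 - s)/(s*w^5) := by
    field_simp
  have hnum : 0 ≤ 6*w^5 - 6*s*w^4 - s := by
    nlinarith [h9, hs4w, mul_le_mul_of_nonneg_right hs4w (sub_nonneg.2 hws), hs0.le, hw0.le, mul_pos hs0 hw0]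
  have : 0 ≤ 6 * (s⁻¹ - w⁻¹) - (w^5)⁻¹ := by
    rw [heq]; positivity
  linarith



private lemma tail_bound (K : ℕ) (hK : 1 ≤ K) :
    ∑' k : ℕ, ((k + K + 1 : ℕ) : ℝ) ^ (-(5:ℝ)/4) ≤ 6 * (K:ℝ) ^ (-(1:ℝ)/4) := by
  apply Real.tsum_le_of_sum_range_le (fun n => by positivity)
  intro n
  set g : ℕ → ℝ := fun k => ((k + K : ℕ) : ℝ) ^ (-(1:ℝ)/4) with hg_def
  have step : ∀ k : ℕ, ((k + K + 1 : ℕ) : ℝ) ^ (-(5:ℝ)/4) ≤ 6 * (g k - g (k+1)) := by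
    intro k
    have h1 : (1:ℝ) ≤ ((k + K : ℕ) : ℝ) := by
      exact_mod_cast Nat.le_add_left 1 k |>.trans (Nat.add_le_add_left hK k)
    have h2 := key_ineq h1
    have e1 : ((k + K + 1 : ℕ) : ℝ) = ((k + K : ℕ) : ℝ) + 1 := by push_cast; ring
    have e2 : ((k + 1 + K : ℕ) : ℝ) = ((k + K : ℕ) : ℝ) + 1 := by push_cast; ring
    rw [hg_def]
    simp only [e1, e2]
    exact h2
  calc ∑ k ∈ Finset.range n, ((k + K + 1 : ℕ) : ℝ) ^ (-(5:ℝ)/4)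
      ≤ ∑ k ∈ Finset.range n, 6 * (g k - g (k+1)) :=
        Finset.sum_le_sum (fun k _ => step k)
    _ = 6 * (g 0 - g n) := by rw [← Finset.mul_sum, Finset.sum_range_sub' g]
    _ ≤ 6 * g 0 := by
        have : 0 ≤ g n := by rw [hg_def]; positivity
        linarith
    _ = 6 * (K:ℝ) ^ (-(1:ℝ)/4) := by rw [hg_def]; norm_num



private lemma pow_combine {x : ℝ} (hx : 0 < x) :
    x ^ (-(5:ℝ)/4) * x ^ 4 = x ^ ((11:ℝ)/4) := by
  rw [← Real.rpow_natCast x 4, ← Real.rpow_add hx]; norm_num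


set_option maxHeartbeats 1000000 in
/-- Variance estimate in the proof of Lemma 6.1: for every `c > 0` there is `C > 0` such that
for all `t ∈ (0,1]`, `∑_{k≥1} k^{-5/4} (1 - e^{-c k⁴ t}) ≤ C t^{1/16}`. -/
theorem stmt6 :
    ∀ c > (0:ℝ), ∃ C > (0:ℝ), ∀ t : ℝ, 0 < t → t ≤ 1 →
      ∑' (k : ℕ), ((k + 1 : ℕ) : ℝ) ^ (-(5:ℝ)/4)
          * (1 - Real.exp (-c * ((k + 1 : ℕ) : ℝ)^4 * t))
        ≤ C * t ^ ((1:ℝ)/16) := by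
  intro c hc
  refine ⟨16*c + 6, by positivity, ?_⟩
  intro t ht ht1
  set f : ℕ → ℝ := fun k => ((k + 1 : ℕ) : ℝ) ^ (-(5:ℝ)/4)
      * (1 - Real.exp (-c * ((k + 1 : ℕ) : ℝ)^4 * t)) with hf_def
  have hf0 : ∀ k, 0 ≤ f k := by
    intro k
    apply mul_nonneg (by positivity)
    have : Real.exp (-c * ((k + 1 : ℕ) : ℝ)^4 * t) ≤ 1 := by
      rw [Real.exp_le_one_iff]
      have : (0:ℝ) ≤ c * ((k + 1 : ℕ) : ℝ)^4 * t := by positivity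
      nlinarith
    linarith
  have hfle : ∀ k, f k ≤ ((k + 1 : ℕ) : ℝ) ^ (-(5:ℝ)/4) := by
    intro k
    have h1 : 1 - Real.exp (-c * ((k + 1 : ℕ) : ℝ)^4 * t) ≤ 1 := by
      have := Real.exp_pos (-c * ((k + 1 : ℕ) : ℝ)^4 * t); linarith
    calc f k ≤ ((k + 1 : ℕ) : ℝ) ^ (-(5:ℝ)/4) * 1 :=
          mul_le_mul_of_nonneg_left h1 (by positivity)
      _ = _ := mul_one _
  have hg : Summable (fun k : ℕ => ((k + 1 : ℕ) : ℝ) ^ (-(5:ℝ)/4)) := by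
    have h := Real.summable_nat_rpow (p := -(5:ℝ)/4) |>.2 (by norm_num)
    exact (summable_nat_add_iff 1).2 h
  have hf : Summable f := Summable.of_nonneg_of_le hf0 hfle hg
  have htq : (1:ℝ) ≤ t ^ (-(1:ℝ)/4) :=
    Real.one_le_rpow_of_pos_of_le_one_of_nonpos ht ht1 (by norm_num)
  obtain ⟨K, hK1, hKge, hKle⟩ : ∃ K : ℕ, 1 ≤ K ∧ t ^ (-(1:ℝ)/4) ≤ (K:ℝ) ∧
      (K:ℝ) ≤ 2 * t ^ (-(1:ℝ)/4) := by
    refine ⟨⌈t ^ (-(1:ℝ)/4)⌉₊, Nat.one_le_ceil_iff.2 (by linarith), Nat.le_ceil _, ?_⟩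
    have := Nat.ceil_lt_add_one (le_of_lt (show (0:ℝ) < t ^ (-(1:ℝ)/4) by positivity))
    linarith
  have hKpos : (0:ℝ) < (K:ℝ) := by exact_mod_cast hK1
  -- finite part
  have hsum1 : ∑ k ∈ Finset.range K, f k ≤ 16*c * t ^ ((1:ℝ)/16) := by
    have hterm : ∀ k ∈ Finset.range K, f k ≤ c * t * (K:ℝ) ^ ((11:ℝ)/4) := by
      intro k hk
      have hn0 : (0:ℝ) < ((k + 1 : ℕ) : ℝ) := by positivity
      have hexp : 1 - Real.exp (-c * ((k + 1 : ℕ) : ℝ)^4 * t)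
          ≤ c * ((k + 1 : ℕ) : ℝ)^4 * t := by
        have h := Real.add_one_le_exp (-(c * ((k + 1 : ℕ) : ℝ)^4 * t))
        have e : -c * ((k + 1 : ℕ) : ℝ)^4 * t = -(c * ((k + 1 : ℕ) : ℝ)^4 * t) := by ring
        rw [e]; linarith
      have h2 : f k ≤ ((k + 1 : ℕ) : ℝ) ^ (-(5:ℝ)/4) * (c * ((k + 1 : ℕ) : ℝ)^4 * t) :=
        mul_le_mul_of_nonneg_left hexp (by positivity)
      have h3 : ((k + 1 : ℕ) : ℝ) ^ (-(5:ℝ)/4) * (c * ((k + 1 : ℕ) : ℝ)^4 * t)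
          = c * t * ((k + 1 : ℕ) : ℝ) ^ ((11:ℝ)/4) := by
        rw [← pow_combine hn0]; ring
      have h4 : ((k + 1 : ℕ) : ℝ) ^ ((11:ℝ)/4) ≤ (K:ℝ) ^ ((11:ℝ)/4) := by
        apply Real.rpow_le_rpow hn0.le _ (by norm_num)
        exact_mod_cast Nat.succ_le_of_lt (Finset.mem_range.1 hk)
      calc f k ≤ c * t * ((k + 1 : ℕ) : ℝ) ^ ((11:ℝ)/4) := by rw [← h3]; exact h2
        _ ≤ c * t * (K:ℝ) ^ ((11:ℝ)/4) :=
            mul_le_mul_of_nonneg_left h4 (by positivity)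
    have hsum : ∑ k ∈ Finset.range K, f k ≤ (K:ℝ) * (c * t * (K:ℝ) ^ ((11:ℝ)/4)) := by
      calc ∑ k ∈ Finset.range K, f k ≤ ∑ _k ∈ Finset.range K, c * t * (K:ℝ) ^ ((11:ℝ)/4) :=
            Finset.sum_le_sum hterm
        _ = (K:ℝ) * (c * t * (K:ℝ) ^ ((11:ℝ)/4)) := by
            rw [Finset.sum_const, Finset.card_range, nsmul_eq_mul]
    have hK154 : (K:ℝ) * (K:ℝ) ^ ((11:ℝ)/4) = (K:ℝ) ^ ((15:ℝ)/4) := by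
      nth_rewrite 1 [← Real.rpow_one (K:ℝ)]
      rw [← Real.rpow_add hKpos]; norm_num
    have hKb : (K:ℝ) ^ ((15:ℝ)/4) ≤ 16 * t ^ (-(15:ℝ)/16) := by
      have h1 : (K:ℝ) ^ ((15:ℝ)/4) ≤ (2 * t ^ (-(1:ℝ)/4)) ^ ((15:ℝ)/4) :=
        Real.rpow_le_rpow (Nat.cast_nonneg _) hKle (by norm_num)
      have h2 : (2 * t ^ (-(1:ℝ)/4)) ^ ((15:ℝ)/4)
          = 2 ^ ((15:ℝ)/4) * (t ^ (-(1:ℝ)/4)) ^ ((15:ℝ)/4) :=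
        Real.mul_rpow (by norm_num) (by positivity)
      have h3 : (t ^ (-(1:ℝ)/4)) ^ ((15:ℝ)/4) = t ^ (-(15:ℝ)/16) := by
        rw [← Real.rpow_mul ht.le]; norm_num
      have h4 : (2:ℝ) ^ ((15:ℝ)/4) ≤ 16 := by
        have h5 : (2:ℝ) ^ ((15:ℝ)/4) ≤ 2 ^ ((4:ℕ):ℝ) :=
          Real.rpow_le_rpow_of_exponent_le one_le_two (by norm_num)
        rw [Real.rpow_natCast] at h5
        norm_num at h5
        linarith
      have h6 : (0:ℝ) ≤ t ^ (-(15:ℝ)/16) := by positivity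
      calc (K:ℝ) ^ ((15:ℝ)/4) ≤ 2 ^ ((15:ℝ)/4) * t ^ (-(15:ℝ)/16) := by
            rw [← h3, ← h2]; exact h1
        _ ≤ 16 * t ^ (-(15:ℝ)/16) := mul_le_mul_of_nonneg_right h4 h6
    have htt : t * t ^ (-(15:ℝ)/16) = t ^ ((1:ℝ)/16) := by
      nth_rewrite 1 [← Real.rpow_one t]
      rw [← Real.rpow_add ht]; norm_num
    calc ∑ k ∈ Finset.range K, f k ≤ (K:ℝ) * (c * t * (K:ℝ) ^ ((11:ℝ)/4)) := hsum
      _ = c * t * (K:ℝ) ^ ((15:ℝ)/4) := by rw [← hK154]; ring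
      _ ≤ c * t * (16 * t ^ (-(15:ℝ)/16)) :=
          mul_le_mul_of_nonneg_left hKb (by positivity)
      _ = 16 * c * (t * t ^ (-(15:ℝ)/16)) := by ring
      _ = 16 * c * t ^ ((1:ℝ)/16) := by rw [htt]
  -- tail part
  have hsum2 : ∑' k : ℕ, f (k + K) ≤ 6 * t ^ ((1:ℝ)/16) := by
    have hgs : Summable (fun k : ℕ => ((k + K + 1 : ℕ) : ℝ) ^ (-(5:ℝ)/4)) := by
      exact (summable_nat_add_iff (f := fun n : ℕ => ((n + 1 : ℕ) : ℝ) ^ (-(5:ℝ)/4)) K).2 hg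
    have h1 : ∑' k : ℕ, f (k + K) ≤ ∑' k : ℕ, ((k + K + 1 : ℕ) : ℝ) ^ (-(5:ℝ)/4) := by
      exact Summable.tsum_le_tsum (fun k => hfle (k + K)) ((summable_nat_add_iff K).2 hf) hgs
    have h2 := tail_bound K hK1
    have h3 : (K:ℝ) ^ (-(1:ℝ)/4) ≤ t ^ ((1:ℝ)/16) := by
      have h4 := Real.rpow_le_rpow_of_nonpos (show (0:ℝ) < t ^ (-(1:ℝ)/4) by positivity)
        hKge (show -(1:ℝ)/4 ≤ 0 by norm_num)
      rwa [← Real.rpow_mul ht.le, show (-(1:ℝ)/4) * (-(1:ℝ)/4) = (1:ℝ)/16 by norm_num] at h4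
    calc ∑' k : ℕ, f (k + K) ≤ ∑' k : ℕ, ((k + K + 1 : ℕ) : ℝ) ^ (-(5:ℝ)/4) := h1
      _ ≤ 6 * (K:ℝ) ^ (-(1:ℝ)/4) := h2
      _ ≤ 6 * t ^ ((1:ℝ)/16) := by linarith
  rw [← Summable.sum_add_tsum_nat_add K hf]
  have : (16*c + 6) * t ^ ((1:ℝ)/16) = 16*c * t ^ ((1:ℝ)/16) + 6 * t ^ ((1:ℝ)/16) := by ring
  rw [this]
  exact add_le_add hsum1 hsum2
end

section
/- Let L > 0 and let u : [0, L] → ℝ be three times continuously differentiable with u'(0) = u'(L) = 0. Then ∫₀^L u(x) · g''(x) dx = 0, where g(x) = (u'(x))² and g'' denotes its second derivative. -/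
open intervalIntegral

lemma deriv_deriv_sq {f : ℝ → ℝ} (hf : ContDiff ℝ 2 f) (x : ℝ) :
    deriv (deriv fun y => f y ^ 2) x = 2 * deriv f x ^ 2 + 2 * f x * deriv (deriv f) x := by
  have hf' : ContDiff ℝ 1 (deriv f) := hf.deriv' (n := 1)
  have hd : deriv (fun y => f y ^ 2) = fun y => 2 * f y * deriv f y := by
    funext y
    simpa [mul_comm] using ((hf.differentiable (by norm_num) y).hasDerivAt.fun_pow 2).deriv
  have hg := (((hf.differentiable (by norm_num) x).hasDerivAt.const_mul 2).fun_mul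
    (hf'.differentiable one_ne_zero x).hasDerivAt)
  rw [hd, hg.deriv]
  ring

/-- `u (v²)'' = (2 u v v' - (2/3) v³)'` when `v = u'`: integrate by parts once, then
`u' (v²)' = 2 v² v' = ((2/3) v³)'`. -/
lemma hasDerivAt_mul_deriv_deriv_sq {u v w z : ℝ → ℝ} {x : ℝ} (hu : HasDerivAt u (v x) x)
    (hv : HasDerivAt v (w x) x) (hw : HasDerivAt w (z x) x) :
    HasDerivAt (fun y => 2 * u y * v y * w y - 2 / 3 * v y ^ 3)
      (u x * (2 * w x ^ 2 + 2 * v x * z x)) x := by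
  refine ((((hu.const_mul 2).fun_mul hv).fun_mul hw).sub
    ((hv.fun_pow 3).const_mul (2 / 3))).congr_deriv ?_
  push_cast
  ring

theorem integral_mul_deriv_deriv_deriv_sq {u : ℝ → ℝ} (hu : ContDiff ℝ 3 u) (a b : ℝ) :
    ∫ x in a..b, u x * deriv (deriv fun y => deriv u y ^ 2) x =
      (2 * u b * deriv u b * deriv (deriv u) b - 2 / 3 * deriv u b ^ 3) -
        (2 * u a * deriv u a * deriv (deriv u) a - 2 / 3 * deriv u a ^ 3) := by
  have hu1 : ContDiff ℝ 2 (deriv u) := hu.deriv' (n := 2)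
  have hu2 : ContDiff ℝ 1 (deriv (deriv u)) := hu1.deriv' (n := 1)
  have hu3 : Continuous (deriv (deriv (deriv u))) := hu2.continuous_deriv le_rfl
  simp_rw [deriv_deriv_sq hu1]
  refine integral_eq_sub_of_hasDerivAt (fun x _ => hasDerivAt_mul_deriv_deriv_sq
    (hu.differentiable (by norm_num) x).hasDerivAt
    (hu1.differentiable (by norm_num) x).hasDerivAt
    (hu2.differentiable one_ne_zero x).hasDerivAt) ?_
  exact (hu.continuous.mul ((continuous_const.mul (hu2.continuous.pow 2)).add
    ((continuous_const.mul hu1.continuous).mul hu3))).intervalIntegrable _ _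

theorem stmt8_general (L : ℝ) (u : ℝ → ℝ) (hu : ContDiff ℝ 3 u)
    (h0 : deriv u 0 = 0) (hLb : deriv u L = 0) :
    ∫ x in (0:ℝ)..L, u x * deriv (deriv (fun y => (deriv u y)^2)) x = 0 := by
  rw [integral_mul_deriv_deriv_deriv_sq hu, h0, hLb]
  ring

/-- Orthogonality relation `⟨u, ∂ₓ²(∂ₓu)²⟩ = 0`: for `u` three times continuously
differentiable with `u'(0) = u'(L) = 0`, `∫₀^L u (g'') = 0`, where `g = (u')²`. -/
theorem stmt8 (L : ℝ) (hL : 0 < L) (u : ℝ → ℝ) (hu : ContDiff ℝ 3 u)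
    (h0 : deriv u 0 = 0) (hLb : deriv u L = 0) :
    ∫ x in (0:ℝ)..L, u x * deriv (deriv (fun y => (deriv u y)^2)) x = 0 :=
  stmt8_general L u hu h0 hLb
end

section
/- Let L > 0, ν ∈ ℝ, let v : [0, L] → ℝ be four times continuously differentiable with v'(0) = v'(L) = 0 and v'''(0) = v'''(L) = 0, and let Φ : [0, L] → ℝ be three times continuously differentiable with Φ'(0) = Φ'(L) = 0. Then ∫₀^L v·(−v'''' + ν v'' − 2(Φ' v')'') dx = −∫₀^L (v'')² dx − ν ∫₀^L (v')² dx + ∫₀^L Φ'' (v')² dx. -/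
/-- Bilinear-form identity (5.3): for `v` four times and `Φ` three times continuously
differentiable, with `v'(0) = v'(L) = 0`, `v'''(0) = v'''(L) = 0` and `Φ'(0) = Φ'(L) = 0`,
`∫₀^L v (-v'''' + ν v'' - 2(Φ' v')'') = -∫₀^L (v'')² - ν ∫₀^L (v')² + ∫₀^L Φ'' (v')²`. -/
theorem stmt11 (L : ℝ) (hL : 0 < L) (ν : ℝ) (v Φ : ℝ → ℝ)
    (hv : ContDiff ℝ 4 v) (hΦ : ContDiff ℝ 3 Φ)
    (hv1 : deriv v 0 = 0) (hv2 : deriv v L = 0)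
    (hv3 : deriv (deriv (deriv v)) 0 = 0) (hv4 : deriv (deriv (deriv v)) L = 0)
    (hΦ1 : deriv Φ 0 = 0) (hΦ2 : deriv Φ L = 0) :
    ∫ x in (0:ℝ)..L,
        v x * (-(deriv (deriv (deriv (deriv v))) x) + ν * deriv (deriv v) x
          - 2 * deriv (deriv (fun y => deriv Φ y * deriv v y)) x)
      = -(∫ x in (0:ℝ)..L, (deriv (deriv v) x)^2)
        - ν * (∫ x in (0:ℝ)..L, (deriv v x)^2)
        + ∫ x in (0:ℝ)..L, deriv (deriv Φ) x * (deriv v x)^2 := by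
  -- smoothness of derivatives
  have hvd3 : ContDiff ℝ 3 (deriv v) := by
    have h4 : ContDiff ℝ (3+1) v := by norm_num; exact hv
    exact (contDiff_succ_iff_deriv.mp h4).2.2
  have hvd2 : ContDiff ℝ 2 (deriv (deriv v)) := by
    have h3 : ContDiff ℝ (2+1) (deriv v) := by norm_num; exact hvd3
    exact (contDiff_succ_iff_deriv.mp h3).2.2
  have hvd1 : ContDiff ℝ 1 (deriv (deriv (deriv v))) := by
    have h2 : ContDiff ℝ (1+1) (deriv (deriv v)) := by norm_num; exact hvd2
    exact (contDiff_succ_iff_deriv.mp h2).2.2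
  have hΦd2 : ContDiff ℝ 2 (deriv Φ) := by
    have h3 : ContDiff ℝ (2+1) Φ := by norm_num; exact hΦ
    exact (contDiff_succ_iff_deriv.mp h3).2.2
  have hΦd1 : ContDiff ℝ 1 (deriv (deriv Φ)) := by
    have h2 : ContDiff ℝ (1+1) (deriv Φ) := by norm_num; exact hΦd2
    exact (contDiff_succ_iff_deriv.mp h2).2.2
  -- differentiability
  have dv : Differentiable ℝ v := hv.differentiable (by norm_num)
  have dv1 : Differentiable ℝ (deriv v) := hvd3.differentiable (by norm_num)
  have dv2 : Differentiable ℝ (deriv (deriv v)) := hvd2.differentiable (by norm_num)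
  have dv3 : Differentiable ℝ (deriv (deriv (deriv v))) := hvd1.differentiable (by norm_num)
  have dΦ1 : Differentiable ℝ (deriv Φ) := hΦd2.differentiable (by norm_num)
  -- the product w = Φ' v'
  set w : ℝ → ℝ := fun y => deriv Φ y * deriv v y with hw_def
  have hwC : ContDiff ℝ 2 w := hΦd2.mul (hvd3.of_le (by norm_num))
  have dw : Differentiable ℝ w := hwC.differentiable (by norm_num)
  have hwd1 : ContDiff ℝ 1 (deriv w) := by
    have h2 : ContDiff ℝ (1+1) w := by norm_num; exact hwC
    exact (contDiff_succ_iff_deriv.mp h2).2.2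
  have dw1 : Differentiable ℝ (deriv w) := hwd1.differentiable (by norm_num)
  -- formula for deriv w
  have hderw : ∀ x, deriv w x = deriv (deriv Φ) x * deriv v x + deriv Φ x * deriv (deriv v) x :=
    fun x => deriv_mul (dΦ1 x) (dv1 x)
  have hw0 : deriv w 0 = 0 := by rw [hderw, hv1, hΦ1]; ring
  have hwL : deriv w L = 0 := by rw [hderw, hv2, hΦ2]; ring
  -- continuity facts
  have cv : Continuous v := hv.continuous
  have cv1 : Continuous (deriv v) := hvd3.continuous
  have cv2 : Continuous (deriv (deriv v)) := hvd2.continuous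
  have cv3 : Continuous (deriv (deriv (deriv v))) := hvd1.continuous
  have cv4 : Continuous (deriv (deriv (deriv (deriv v)))) := hvd1.continuous_deriv le_rfl
  have cΦ1 : Continuous (deriv Φ) := hΦd2.continuous
  have cΦ2 : Continuous (deriv (deriv Φ)) := hΦd1.continuous
  have cw : Continuous w := hwC.continuous
  have cw1 : Continuous (deriv w) := hwd1.continuous
  have cw2 : Continuous (deriv (deriv w)) := hwd1.continuous_deriv le_rfl
  -- HasDerivAt families
  have Hv : ∀ x ∈ Set.uIcc (0:ℝ) L, HasDerivAt v (deriv v x) x := fun x _ => (dv x).hasDerivAt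
  have Hv1 : ∀ x ∈ Set.uIcc (0:ℝ) L, HasDerivAt (deriv v) (deriv (deriv v) x) x :=
    fun x _ => (dv1 x).hasDerivAt
  have Hv2 : ∀ x ∈ Set.uIcc (0:ℝ) L, HasDerivAt (deriv (deriv v)) (deriv (deriv (deriv v)) x) x :=
    fun x _ => (dv2 x).hasDerivAt
  have Hv3 : ∀ x ∈ Set.uIcc (0:ℝ) L,
      HasDerivAt (deriv (deriv (deriv v))) (deriv (deriv (deriv (deriv v))) x) x :=
    fun x _ => (dv3 x).hasDerivAt
  have Hw : ∀ x ∈ Set.uIcc (0:ℝ) L, HasDerivAt w (deriv w x) x := fun x _ => (dw x).hasDerivAt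
  have Hw1 : ∀ x ∈ Set.uIcc (0:ℝ) L, HasDerivAt (deriv w) (deriv (deriv w) x) x :=
    fun x _ => (dw1 x).hasDerivAt
  have HΦ1 : ∀ x ∈ Set.uIcc (0:ℝ) L, HasDerivAt (deriv Φ) (deriv (deriv Φ) x) x :=
    fun x _ => (dΦ1 x).hasDerivAt
  have Hsq : ∀ x ∈ Set.uIcc (0:ℝ) L,
      HasDerivAt (fun y => (deriv v y)^2) (2 * deriv v x ^ 1 * deriv (deriv v) x) x :=
    fun x _ => ((dv1 x).hasDerivAt).pow 2
  -- Step 1: ∫ v v'''' = ∫ (v'')²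
  have E1 : (∫ x in (0:ℝ)..L, v x * deriv (deriv (deriv (deriv v))) x)
      = ∫ x in (0:ℝ)..L, (deriv (deriv v) x)^2 := by
    have s1 := intervalIntegral.integral_mul_deriv_eq_deriv_mul Hv Hv3
      (cv1.intervalIntegrable 0 L) (cv4.intervalIntegrable 0 L)
    have s2 := intervalIntegral.integral_mul_deriv_eq_deriv_mul Hv1 Hv2
      (cv2.intervalIntegrable 0 L) (cv3.intervalIntegrable 0 L)
    rw [hv3, hv4] at s1
    rw [hv1, hv2] at s2
    simp only [mul_zero, zero_mul, zero_sub, sub_zero] at s1 s2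
    rw [s1, s2]
    simp [sq]
  -- Step 2: ∫ v v'' = - ∫ (v')²
  have E2 : (∫ x in (0:ℝ)..L, v x * deriv (deriv v) x)
      = -∫ x in (0:ℝ)..L, (deriv v x)^2 := by
    have s := intervalIntegral.integral_mul_deriv_eq_deriv_mul Hv Hv1
      (cv1.intervalIntegrable 0 L) (cv2.intervalIntegrable 0 L)
    rw [hv1, hv2] at s
    simp only [mul_zero, zero_sub] at s
    rw [s]
    simp [sq]
  -- Step 3: ∫ v (Φ' v')'' = ∫ v'' (Φ' v')
  have E3 : (∫ x in (0:ℝ)..L, v x * deriv (deriv w) x)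
      = ∫ x in (0:ℝ)..L, deriv (deriv v) x * w x := by
    have s1 := intervalIntegral.integral_mul_deriv_eq_deriv_mul Hv Hw1
      (cv1.intervalIntegrable 0 L) (cw2.intervalIntegrable 0 L)
    have s2 := intervalIntegral.integral_mul_deriv_eq_deriv_mul Hv1 Hw
      (cv2.intervalIntegrable 0 L) (cw1.intervalIntegrable 0 L)
    rw [hw0, hwL] at s1
    rw [hv1, hv2] at s2
    simp only [mul_zero, zero_mul, zero_sub, sub_zero] at s1 s2
    rw [s1, s2, neg_neg]
  -- Step 4: 2 ∫ v'' (Φ' v') = - ∫ Φ'' (v')²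
  have E4 : (2:ℝ) * (∫ x in (0:ℝ)..L, deriv (deriv v) x * w x)
      = -∫ x in (0:ℝ)..L, deriv (deriv Φ) x * (deriv v x)^2 := by
    have s := intervalIntegral.integral_mul_deriv_eq_deriv_mul HΦ1 Hsq
      (cΦ2.intervalIntegrable 0 L)
      (((continuous_const.mul (cv1.pow 1)).mul cv2).intervalIntegrable 0 L)
    rw [hΦ1, hΦ2] at s
    simp only [zero_mul, zero_sub, sub_zero] at s
    calc (2:ℝ) * (∫ x in (0:ℝ)..L, deriv (deriv v) x * w x)
        = ∫ x in (0:ℝ)..L, deriv Φ x * (2 * deriv v x ^ 1 * deriv (deriv v) x) := by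
          rw [← intervalIntegral.integral_const_mul]
          apply intervalIntegral.integral_congr
          intro x _
          simp only [hw_def]
          ring
      _ = -∫ x in (0:ℝ)..L, deriv (deriv Φ) x * (deriv v x)^2 := s
  -- combine
  have split : (∫ x in (0:ℝ)..L,
        v x * (-(deriv (deriv (deriv (deriv v))) x) + ν * deriv (deriv v) x
          - 2 * deriv (deriv w) x))
      = -(∫ x in (0:ℝ)..L, v x * deriv (deriv (deriv (deriv v))) x)
        + ν * (∫ x in (0:ℝ)..L, v x * deriv (deriv v) x)
        - 2 * ∫ x in (0:ℝ)..L, v x * deriv (deriv w) x := by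
    rw [← intervalIntegral.integral_neg, ← intervalIntegral.integral_const_mul,
        ← intervalIntegral.integral_const_mul, ← intervalIntegral.integral_add, ←
        intervalIntegral.integral_sub]
    · apply intervalIntegral.integral_congr
      intro x _
      simp only
      ring
    · exact ((cv.mul cv4).neg.intervalIntegrable 0 L).add
        ((continuous_const.mul (cv.mul cv2)).intervalIntegrable 0 L)
    · exact (continuous_const.mul (cv.mul cw2)).intervalIntegrable 0 L
    · exact (cv.mul cv4).neg.intervalIntegrable 0 L
    · exact (continuous_const.mul (cv.mul cv2)).intervalIntegrable 0 L
  rw [split, E1, E2, E3]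
  have := E4
  linarith
end

section
/- Let L > 0 and ν > −π²/L². Then there exist constants α > 0, β > 0 and C ≥ 0 such that for every four times continuously differentiable v : [0, L] → ℝ with ∫₀^L v(x) dx = 0, v'(0) = v'(L) = 0, v'''(0) = v'''(L) = 0, and every twice continuously differentiable h : [0, L] → ℝ with h(0) = h(L) = 0, one has 2∫₀^L v·(−v'''' + ν v'') dx − 2∫₀^L v·g'' dx ≤ −α ∫₀^L v² dx − β ∫₀^L (v'')² dx + C·(sup_{x∈[0,L]} |h(x)|)⁴ · ∫₀^L v² dx + C ∫₀^L h(x)⁴ dx, where g(x) = (v'(x) + h(x))². -/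
/-!
Integrating by parts with the boundary conditions turns the linear term into `-2‖v''‖² - 2ν‖v'‖²`
and the nonlinear one into `2∫ v''(2v'h + h²)`, the cubic part `∫ v''v'²` being a total
derivative. Since `v'` vanishes at both ends, Wirtinger's inequality `(π/L)²‖v'‖² ≤ ‖v''‖²` leaves
a fraction `θ > 0` of `‖v''‖²` once the `ν`-term is absorbed (this is where `ν > -π²/L²` enters),
and the Poincaré inequality for the zero-mean `v` converts part of it into `-α‖v‖²`. The nonlinear
terms are handled by Young's inequality; the resulting `sup|h|²‖v'‖²` is traded, via
`‖v'‖² = -∫ v v''`, for `sup|h|⁴‖v‖²` plus a small multiple of `‖v''‖²`.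
-/

open Real MeasureTheory Filter Topology Set
open scoped Interval

theorem mul_mul_le_of_sq_le_four_mul {c p q : ℝ} (hp : 0 ≤ p) (hq : 0 ≤ q)
    (hc : c ^ 2 ≤ 4 * p * q) (x y : ℝ) : c * x * y ≤ p * x ^ 2 + q * y ^ 2 := by
  rcases hp.eq_or_lt with rfl | hp
  · obtain rfl : c = 0 := by nlinarith
    nlinarith
  · nlinarith [sq_nonneg (2 * p * x - c * y), sq_nonneg y]

variable {a b : ℝ}

theorem exists_eq_zero_of_intervalIntegral_eq_zero (hab : a ≠ b) {f : ℝ → ℝ}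
    (hf : ContinuousOn f (uIcc a b)) (h : ∫ x in a..b, f x = 0) :
    ∃ c ∈ uIoo a b, f c = 0 := by
  simpa [interval_average_eq_div, h] using exists_eq_interval_average hab hf

theorem abs_sub_le_integral_abs_deriv (hab : a ≤ b) {g : ℝ → ℝ} (hg : ContDiff ℝ 1 g)
    {x y : ℝ} (hx : x ∈ Icc a b) (hy : y ∈ Icc a b) :
    |g x - g y| ≤ ∫ t in a..b, |deriv g t| := by
  have hg'c := hg.continuous_deriv le_rfl
  rw [← intervalIntegral.integral_eq_sub_of_hasDerivAt
    (fun t _ => (hg.differentiable one_ne_zero t).hasDerivAt) (hg'c.intervalIntegrable _ _)]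
  calc |∫ t in y..x, deriv g t| ≤ ∫ t in Ι y x, |deriv g t| := by
        simpa only [Real.norm_eq_abs] using
          intervalIntegral.norm_integral_le_integral_norm_uIoc (f := deriv g)
    _ ≤ ∫ t in Ι a b, |deriv g t| :=
        setIntegral_mono_set hg'c.abs.integrableOn_Ioc (ae_of_all _ fun t => abs_nonneg _)
          (uIoc_subset_uIoc_of_uIcc_subset_uIcc
            (uIcc_subset_uIcc (Icc_subset_uIcc hy) (Icc_subset_uIcc hx))).eventuallyLE
    _ = ∫ t in a..b, |deriv g t| := by rw [uIoc_of_le hab, intervalIntegral.integral_of_le hab]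

theorem integral_sq_le_of_integral_eq_zero (hab : a < b) {v : ℝ → ℝ}
    (hv : ContDiff ℝ 1 v) (hmean : ∫ x in a..b, v x = 0) :
    (∫ x in a..b, v x ^ 2) ≤ 4 * (b - a) ^ 2 * ∫ x in a..b, deriv v x ^ 2 := by
  have hℓ : 0 < b - a := sub_pos.2 hab
  have hvc := hv.continuous
  have hv'c := hv.continuous_deriv le_rfl
  obtain ⟨ξ, hξ, hvξ⟩ :=
    exists_eq_zero_of_intervalIntegral_eq_zero hab.ne hvc.continuousOn hmean
  rw [uIoo_of_le hab.le] at hξ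
  set k : ℝ → ℝ := fun x => 1 / (2 * (b - a)) * v x ^ 2 + 2 * (b - a) * deriv v x ^ 2
  have hk : ∀ x, |deriv (fun y => v y ^ 2) x| ≤ k x := fun x => by
    have := mul_mul_le_of_sq_le_four_mul (c := 2) (p := 1 / (2 * (b - a))) (q := 2 * (b - a))
      (by positivity) (by positivity) (by field_simp; norm_num) |v x| |deriv v x|
    rw [sq_abs, sq_abs] at this
    rw [((hv.differentiable one_ne_zero x).hasDerivAt.fun_pow 2).deriv]
    simpa only [Nat.cast_ofNat, Nat.add_one_sub_one, pow_one, abs_mul, abs_two] using this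
  have hsup : ∀ x ∈ Icc a b, v x ^ 2 ≤ ∫ y in a..b, k y := fun x hx =>
    calc v x ^ 2 = |v x ^ 2 - v ξ ^ 2| := by rw [hvξ, zero_pow two_ne_zero, sub_zero, abs_sq]
      _ ≤ ∫ y in a..b, |deriv (fun y => v y ^ 2) y| :=
        abs_sub_le_integral_abs_deriv hab.le (hv.pow 2) hx (Ioo_subset_Icc_self hξ)
      _ ≤ ∫ y in a..b, k y :=
        intervalIntegral.integral_mono_on hab.le
          (((hv.pow 2).continuous_deriv le_rfl).abs.intervalIntegrable _ _)
          (Continuous.intervalIntegrable (by fun_prop) _ _) fun y _ => hk y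
  have hint : ∫ y in a..b, k y = 1 / (2 * (b - a)) * (∫ x in a..b, v x ^ 2)
      + 2 * (b - a) * ∫ x in a..b, deriv v x ^ 2 := by
    rw [intervalIntegral.integral_add (Continuous.intervalIntegrable (by fun_prop) _ _)
      (Continuous.intervalIntegrable (by fun_prop) _ _), intervalIntegral.integral_const_mul,
      intervalIntegral.integral_const_mul]
  have hmono : (∫ x in a..b, v x ^ 2) ≤ ∫ _ in a..b, ∫ y in a..b, k y :=
    intervalIntegral.integral_mono_on hab.le ((hvc.pow 2).intervalIntegrable _ _)
      intervalIntegrable_const hsup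
  have hhalf : (b - a) * (1 / (2 * (b - a))) = 1 / 2 := by field_simp
  rw [intervalIntegral.integral_const, smul_eq_mul, hint, mul_add, ← mul_assoc, hhalf] at hmono
  nlinarith

theorem sq_mul_integral_sq_le_integral_deriv_sq {k : ℝ} (hab : a ≤ b) (hk : 0 ≤ k)
    (hkπ : k * (b - a) < π) {w : ℝ → ℝ} (hw : ContDiff ℝ 1 w) (ha : w a = 0)
    (hb : w b = 0) :
    k ^ 2 * (∫ x in a..b, w x ^ 2) ≤ ∫ x in a..b, deriv w x ^ 2 := by
  set φ : ℝ → ℝ := fun x => k * (x - (a + b) / 2)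
  have hcos : ∀ x ∈ Icc a b, cos (φ x) ≠ 0 := fun x hx =>
    (cos_pos_of_mem_Ioo ⟨by simp only [φ]; nlinarith [mul_nonneg hk (sub_nonneg.2 hx.1)],
      by simp only [φ]; nlinarith [mul_nonneg hk (sub_nonneg.2 hx.2)]⟩).ne'
  -- `T = k tan φ` solves the Riccati equation `T' = k² + T²`, whence
  -- `w'² - k² w² = (w' + T w)² - (T w²)'`.
  set F : ℝ → ℝ := fun x => -(k * tan (φ x) * w x ^ 2)
  set F' : ℝ → ℝ := fun x =>
    -(k * (k * (1 + tan (φ x) ^ 2)) * w x ^ 2 + k * tan (φ x) * (2 * w x * deriv w x))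
  have hF : ∀ x ∈ Icc a b, HasDerivAt F (F' x) x := by
    intro x hx
    have hφ' : HasDerivAt φ k x := by
      simpa using ((hasDerivAt_id x).sub_const ((a + b) / 2)).const_mul k
    have htan : HasDerivAt (fun y => tan (φ y)) ((1 + tan (φ x) ^ 2) * k) x := by
      have := (hasDerivAt_tan (hcos x hx)).comp x hφ'
      rwa [one_div, ← inv_one_add_tan_sq (hcos x hx), inv_inv] at this
    have hw2 : HasDerivAt (fun y => w y ^ 2) (2 * w x * deriv w x) x :=
      ((hw.differentiable one_ne_zero x).hasDerivAt.fun_pow 2).congr_deriv (by ring)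
    exact ((htan.const_mul k).mul hw2).neg.congr_deriv (by simp only [F']; ring)
  have hF'_le : ∀ x ∈ Ioo a b, F' x ≤ deriv w x ^ 2 - k ^ 2 * w x ^ 2 := fun x _ => by
    nlinarith [sq_nonneg (deriv w x + k * tan (φ x) * w x)]
  have hwc := hw.continuous
  have hw'c := hw.continuous_deriv le_rfl
  have hFTC := intervalIntegral.sub_le_integral_of_hasDeriv_right_of_le hab
    (fun x hx => (hF x hx).continuousAt.continuousWithinAt)
    (fun x hx => (hF x (Ioo_subset_Icc_self hx)).hasDerivWithinAt)
    (by fun_prop : Continuous fun x => deriv w x ^ 2 - k ^ 2 * w x ^ 2).integrableOn_Icc hF'_le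
  rw [intervalIntegral.integral_sub (f := fun x => deriv w x ^ 2) (g := fun x => k ^ 2 * w x ^ 2)
    ((hw'c.pow 2).intervalIntegrable _ _)
    ((continuous_const.mul (hwc.pow 2)).intervalIntegrable _ _),
    intervalIntegral.integral_const_mul] at hFTC
  simp only [F, ha, hb] at hFTC
  linarith

theorem sq_pi_div_mul_integral_sq_le_integral_deriv_sq (hab : a < b) {w : ℝ → ℝ}
    (hw : ContDiff ℝ 1 w) (ha : w a = 0) (hb : w b = 0) :
    (π / (b - a)) ^ 2 * (∫ x in a..b, w x ^ 2) ≤ ∫ x in a..b, deriv w x ^ 2 := by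
  have hℓ : 0 < b - a := sub_pos.2 hab
  have hlim : Tendsto (fun k : ℝ => k ^ 2 * ∫ x in a..b, w x ^ 2) (𝓝[<] (π / (b - a)))
      (𝓝 ((π / (b - a)) ^ 2 * ∫ x in a..b, w x ^ 2)) :=
    ((by fun_prop : Continuous fun k : ℝ => k ^ 2 * ∫ x in a..b, w x ^ 2).tendsto _).mono_left
      nhdsWithin_le_nhds
  refine le_of_tendsto hlim
    (eventually_of_mem (Ioo_mem_nhdsLT (div_pos pi_pos hℓ)) fun k hk => ?_)
  exact sq_mul_integral_sq_le_integral_deriv_sq hab.le hk.1.le ((lt_div_iff₀ hℓ).1 hk.2)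
    hw ha hb

theorem integral_mul_deriv_eq_neg_integral_deriv_mul {u f : ℝ → ℝ} (hu : ContDiff ℝ 1 u)
    (hf : ContDiff ℝ 1 f) (ha : f a = 0) (hb : f b = 0) :
    ∫ x in a..b, u x * deriv f x = -∫ x in a..b, deriv u x * f x := by
  rw [intervalIntegral.integral_mul_deriv_eq_deriv_mul
    (fun x _ => (hu.differentiable one_ne_zero x).hasDerivAt)
    (fun x _ => (hf.differentiable one_ne_zero x).hasDerivAt)
    ((hu.continuous_deriv le_rfl).intervalIntegrable _ _)
    ((hf.continuous_deriv le_rfl).intervalIntegrable _ _), ha, hb]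
  ring

theorem integral_mul_deriv_deriv_eq_deriv_deriv_mul {u f : ℝ → ℝ} (hu : ContDiff ℝ 2 u)
    (hf : ContDiff ℝ 2 f) (hua : deriv u a = 0) (hub : deriv u b = 0)
    (hfa : deriv f a = 0) (hfb : deriv f b = 0) :
    ∫ x in a..b, u x * deriv (deriv f) x = ∫ x in a..b, deriv (deriv u) x * f x := by
  calc ∫ x in a..b, u x * deriv (deriv f) x = -∫ x in a..b, deriv u x * deriv f x :=
        integral_mul_deriv_eq_neg_integral_deriv_mul (hu.of_le one_le_two) hf.deriv' hfa hfb
    _ = ∫ x in a..b, f x * deriv (deriv u) x := by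
        rw [integral_mul_deriv_eq_neg_integral_deriv_mul (hf.of_le one_le_two) hu.deriv' hua hub]
        simp only [mul_comm]
    _ = ∫ x in a..b, deriv (deriv u) x * f x := by simp only [mul_comm]

theorem mul_integral_deriv_sq_le {v : ℝ → ℝ} (hab : a ≤ b) (hv : ContDiff ℝ 2 v)
    (ha : deriv v a = 0) (hb : deriv v b = 0) {c p q : ℝ} (hp : 0 ≤ p) (hq : 0 ≤ q)
    (hc : c ^ 2 ≤ 4 * p * q) :
    c * (∫ x in a..b, deriv v x ^ 2)
      ≤ p * (∫ x in a..b, v x ^ 2) + q * ∫ x in a..b, deriv (deriv v) x ^ 2 := by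
  have hvc := hv.continuous
  have hv''c := hv.deriv'.continuous_deriv le_rfl
  calc c * (∫ x in a..b, deriv v x ^ 2)
      = -c * ∫ x in a..b, v x * deriv (deriv v) x := by
        rw [integral_mul_deriv_eq_neg_integral_deriv_mul (hv.of_le one_le_two) hv.deriv' ha hb]
        simp only [sq, neg_mul_neg]
    _ = ∫ x in a..b, -c * v x * deriv (deriv v) x := by
        rw [← intervalIntegral.integral_const_mul]
        simp only [mul_assoc]
    _ ≤ ∫ x in a..b, (p * v x ^ 2 + q * deriv (deriv v) x ^ 2) :=
        intervalIntegral.integral_mono_on hab (Continuous.intervalIntegrable (by fun_prop) _ _)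
          (Continuous.intervalIntegrable (by fun_prop) _ _)
          fun x _ => mul_mul_le_of_sq_le_four_mul hp hq (by rwa [neg_sq]) _ _
    _ = _ := by
        rw [intervalIntegral.integral_add (Continuous.intervalIntegrable (by fun_prop) _ _)
          (Continuous.intervalIntegrable (by fun_prop) _ _), intervalIntegral.integral_const_mul,
          intervalIntegral.integral_const_mul]

theorem integral_mul_neg_deriv4_add_mul_deriv2_eq {v : ℝ → ℝ} (ν : ℝ)
    (hv : ContDiff ℝ 4 v) (h1a : deriv v a = 0) (h1b : deriv v b = 0)
    (h3a : deriv (deriv (deriv v)) a = 0) (h3b : deriv (deriv (deriv v)) b = 0) :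
    ∫ x in a..b, v x * (-(deriv (deriv (deriv (deriv v))) x) + ν * deriv (deriv v) x)
      = -(∫ x in a..b, deriv (deriv v) x ^ 2) - ν * ∫ x in a..b, deriv v x ^ 2 := by
  have hv2 : ContDiff ℝ 2 (deriv (deriv v)) := hv.iterate_deriv' 2 2
  have h4 : ∫ x in a..b, v x * deriv (deriv (deriv (deriv v))) x
      = ∫ x in a..b, deriv (deriv v) x ^ 2 := by
    rw [integral_mul_deriv_deriv_eq_deriv_deriv_mul (hv.of_le (by norm_num)) hv2 h1a h1b h3a h3b]
    simp only [sq]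
  have h2 : ∫ x in a..b, v x * deriv (deriv v) x = -∫ x in a..b, deriv v x ^ 2 := by
    have hv1 : ContDiff ℝ 1 (deriv v) := (hv.iterate_deriv' 3 1).of_le (by norm_num)
    rw [integral_mul_deriv_eq_neg_integral_deriv_mul (hv.of_le (by norm_num)) hv1 h1a h1b]
    simp only [sq]
  have hc : Continuous v := hv.continuous
  have hc2 : Continuous (deriv (deriv v)) := hv2.continuous
  have hc4 : Continuous (deriv (deriv (deriv (deriv v)))) := (hv.iterate_deriv' 0 4).continuous
  simp only [mul_add, mul_neg, mul_left_comm (v _) ν]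
  rw [intervalIntegral.integral_add (Continuous.intervalIntegrable (by fun_prop) _ _)
    (Continuous.intervalIntegrable (by fun_prop) _ _), intervalIntegral.integral_neg,
    intervalIntegral.integral_const_mul, h4, h2]
  ring

theorem two_mul_integral_mul_neg_deriv4_add_mul_deriv2_le (hab : a < b) {ν θ : ℝ}
    (hθ0 : 0 ≤ θ) (hθ1 : θ ≤ 1) (hθν : θ * (π / (b - a)) ^ 2 ≤ (π / (b - a)) ^ 2 + ν)
    {v : ℝ → ℝ} (hv : ContDiff ℝ 4 v)
    (hmean : ∫ x in a..b, v x = 0) (h1a : deriv v a = 0) (h1b : deriv v b = 0)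
    (h3a : deriv (deriv (deriv v)) a = 0) (h3b : deriv (deriv (deriv v)) b = 0) :
    2 * (∫ x in a..b, v x * (-(deriv (deriv (deriv (deriv v))) x) + ν * deriv (deriv v) x))
      ≤ -(θ * (π / (b - a)) ^ 2 / (4 * (b - a) ^ 2)) * (∫ x in a..b, v x ^ 2)
        - θ * ∫ x in a..b, deriv (deriv v) x ^ 2 := by
  have hℓ : 0 < b - a := sub_pos.2 hab
  have hv1 : ContDiff ℝ 2 (deriv v) := (hv.iterate_deriv' 3 1).of_le (by norm_num)
  have hwirt := sq_pi_div_mul_integral_sq_le_integral_deriv_sq hab (hv1.of_le one_le_two) h1a h1b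
  have hpoinc := integral_sq_le_of_integral_eq_zero hab (hv.of_le (by norm_num)) hmean
  have hB : 0 ≤ ∫ x in a..b, deriv v x ^ 2 :=
    intervalIntegral.integral_nonneg hab.le fun x _ => sq_nonneg _
  have hA := mul_le_mul_of_nonneg_left hpoinc
    (by positivity : 0 ≤ θ * (π / (b - a)) ^ 2 / (4 * (b - a) ^ 2))
  rw [← mul_assoc, div_mul_cancel₀ _ (by positivity)] at hA
  rw [integral_mul_neg_deriv4_add_mul_deriv2_eq ν hv h1a h1b h3a h3b]
  nlinarith [mul_nonneg (by linarith : (0 : ℝ) ≤ 2 - θ) (sub_nonneg.2 hwirt),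
    mul_nonneg (sub_nonneg.2 hθν) hB]

theorem integral_mul_deriv_deriv_sq_deriv_add_eq {v h : ℝ → ℝ} (hv : ContDiff ℝ 3 v)
    (hh : ContDiff ℝ 2 h) (hva : deriv v a = 0) (hvb : deriv v b = 0) (ha : h a = 0)
    (hb : h b = 0) :
    ∫ x in a..b, v x * deriv (deriv fun y => (deriv v y + h y) ^ 2) x
      = ∫ x in a..b, deriv (deriv v) x * (2 * deriv v x * h x + h x ^ 2) := by
  have hv1 : ContDiff ℝ 2 (deriv v) := hv.iterate_deriv' 2 1
  have hg : ContDiff ℝ 2 fun y => (deriv v y + h y) ^ 2 := (hv1.add hh).pow 2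
  have hg' : ∀ x, deriv (fun y => (deriv v y + h y) ^ 2) x
      = 2 * (deriv v x + h x) * (deriv (deriv v) x + deriv h x) := fun x =>
    ((((hv1.differentiable two_ne_zero x).hasDerivAt.add
      (hh.differentiable two_ne_zero x).hasDerivAt).fun_pow 2).deriv).trans (by norm_num)
  have hv1c : Continuous (deriv v) := hv1.continuous
  have hv2c : Continuous (deriv (deriv v)) := hv1.continuous_deriv one_le_two
  have hhc : Continuous h := hh.continuous
  have hcube : ∫ x in a..b, deriv (deriv v) x * deriv v x ^ 2 = 0 := by
    rw [intervalIntegral.integral_eq_sub_of_hasDerivAt (f := fun x => deriv v x ^ 3 / 3)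
      (fun x _ => (((hv1.differentiable two_ne_zero x).hasDerivAt.fun_pow 3).div_const
        3).congr_deriv (by norm_num; ring))
      (Continuous.intervalIntegrable (by fun_prop) _ _), hva, hvb]
    norm_num
  calc ∫ x in a..b, v x * deriv (deriv fun y => (deriv v y + h y) ^ 2) x
      = ∫ x in a..b, deriv (deriv v) x * (deriv v x + h x) ^ 2 :=
        integral_mul_deriv_deriv_eq_deriv_deriv_mul (hv.of_le (by norm_num)) hg hva hvb
          (by rw [hg', hva, ha]; ring) (by rw [hg', hvb, hb]; ring)
    _ = ∫ x in a..b, (deriv (deriv v) x * (2 * deriv v x * h x + h x ^ 2)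
          + deriv (deriv v) x * deriv v x ^ 2) := by
        congr 1; ext x; ring
    _ = ∫ x in a..b, deriv (deriv v) x * (2 * deriv v x * h x + h x ^ 2) := by
        rw [intervalIntegral.integral_add (Continuous.intervalIntegrable (by fun_prop) _ _)
          (Continuous.intervalIntegrable (by fun_prop) _ _), hcube, add_zero]

theorem neg_two_mul_mul_add_sq_le {θ M s : ℝ} (hθ : 0 < θ) (hs : |s| ≤ M) (y z : ℝ) :
    -2 * (z * (2 * y * s + s ^ 2)) ≤ θ / 2 * z ^ 2 + 16 * M ^ 2 / θ * y ^ 2 + 4 / θ * s ^ 4 := by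
  have hsM : s ^ 2 ≤ M ^ 2 := sq_le_sq' (abs_le.1 hs).1 (abs_le.1 hs).2
  have h1 := mul_mul_le_of_sq_le_four_mul (c := -4) (p := θ / 4) (q := 16 / θ) (by positivity)
    (by positivity) (by field_simp; norm_num) z (y * s)
  have h2 := mul_mul_le_of_sq_le_four_mul (c := -2) (p := θ / 4) (q := 4 / θ) (by positivity)
    (by positivity) (by field_simp; norm_num) z (s ^ 2)
  have h3 := mul_le_mul_of_nonneg_left hsM (by positivity : 0 ≤ 16 / θ * y ^ 2)
  linear_combination h1 + h2 + h3

theorem neg_two_mul_integral_mul_deriv_deriv_sq_deriv_add_le (hab : a ≤ b) {θ M : ℝ}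
    (hθ : 0 < θ) {v h : ℝ → ℝ} (hv : ContDiff ℝ 3 v) (hh : ContDiff ℝ 2 h)
    (hva : deriv v a = 0) (hvb : deriv v b = 0) (ha : h a = 0) (hb : h b = 0)
    (hM : ∀ x ∈ Icc a b, |h x| ≤ M) :
    -2 * (∫ x in a..b, v x * deriv (deriv fun y => (deriv v y + h y) ^ 2) x)
      ≤ 3 * θ / 4 * (∫ x in a..b, deriv (deriv v) x ^ 2)
        + 256 / θ ^ 3 * M ^ 4 * (∫ x in a..b, v x ^ 2) + 4 / θ * ∫ x in a..b, h x ^ 4 := by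
  have hv2 : ContDiff ℝ 2 v := hv.of_le (by norm_num)
  have hinterp := mul_integral_deriv_sq_le hab hv2 hva hvb (c := 16 * M ^ 2 / θ)
    (p := 256 / θ ^ 3 * M ^ 4) (q := θ / 4) (by positivity) (by positivity)
    (le_of_eq (by field_simp; ring))
  have hv1c : Continuous (deriv v) := hv2.continuous_deriv one_le_two
  have hv2c : Continuous (deriv (deriv v)) := hv2.deriv'.continuous_deriv le_rfl
  have hhc : Continuous h := hh.continuous
  rw [integral_mul_deriv_deriv_sq_deriv_add_eq hv hh hva hvb ha hb]
  calc -2 * (∫ x in a..b, deriv (deriv v) x * (2 * deriv v x * h x + h x ^ 2))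
      = ∫ x in a..b, -2 * (deriv (deriv v) x * (2 * deriv v x * h x + h x ^ 2)) :=
        (intervalIntegral.integral_const_mul _ _).symm
    _ ≤ ∫ x in a..b, (θ / 2 * deriv (deriv v) x ^ 2 + 16 * M ^ 2 / θ * deriv v x ^ 2
          + 4 / θ * h x ^ 4) :=
        intervalIntegral.integral_mono_on hab (Continuous.intervalIntegrable (by fun_prop) _ _)
          (Continuous.intervalIntegrable (by fun_prop) _ _)
          fun x hx => neg_two_mul_mul_add_sq_le hθ (hM x hx) _ _
    _ = θ / 2 * (∫ x in a..b, deriv (deriv v) x ^ 2)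
          + 16 * M ^ 2 / θ * (∫ x in a..b, deriv v x ^ 2) + 4 / θ * ∫ x in a..b, h x ^ 4 := by
        rw [intervalIntegral.integral_add (Continuous.intervalIntegrable (by fun_prop) _ _)
          (Continuous.intervalIntegrable (by fun_prop) _ _),
          intervalIntegral.integral_add (Continuous.intervalIntegrable (by fun_prop) _ _)
          (Continuous.intervalIntegrable (by fun_prop) _ _), intervalIntegral.integral_const_mul,
          intervalIntegral.integral_const_mul, intervalIntegral.integral_const_mul]
    _ ≤ _ := by linarith

theorem abs_le_iSup_abs_of_mem_Icc {h : ℝ → ℝ} (hh : ContinuousOn h (Icc a b)) {x : ℝ}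
    (hx : x ∈ Icc a b) : |h x| ≤ ⨆ y : Icc a b, |h y| :=
  le_ciSup (f := fun y : Icc a b => |h y|)
    (by simpa only [image_eq_range] using isCompact_Icc.bddAbove_image hh.abs) ⟨x, hx⟩

/-- Dissipativity estimate (4.2): for `L > 0` and `ν > -π²/L²` there exist `α, β > 0` and
`C ≥ 0` such that for every zero-mean `v` with Neumann-type boundary conditions and every
`h` vanishing at the endpoints,
`2∫ v(-v'''' + ν v'') - 2∫ v g'' ≤ -α ∫ v² - β ∫ (v'')² + C (sup|h|)⁴ ∫ v² + C ∫ h⁴`,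
where `g = (v' + h)²`. -/
theorem stmt14 (L : ℝ) (hL : 0 < L) (ν : ℝ) (hν : -π^2 / L^2 < ν) :
    ∃ α > (0:ℝ), ∃ β > (0:ℝ), ∃ C : ℝ, 0 ≤ C ∧
      ∀ v : ℝ → ℝ, ContDiff ℝ 4 v → (∫ x in (0:ℝ)..L, v x) = 0 →
        deriv v 0 = 0 → deriv v L = 0 →
        deriv (deriv (deriv v)) 0 = 0 → deriv (deriv (deriv v)) L = 0 →
      ∀ h : ℝ → ℝ, ContDiff ℝ 2 h → h 0 = 0 → h L = 0 →
        2 * (∫ x in (0:ℝ)..L,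
              v x * (-(deriv (deriv (deriv (deriv v))) x) + ν * deriv (deriv v) x))
          - 2 * (∫ x in (0:ℝ)..L,
              v x * deriv (deriv (fun y => (deriv v y + h y)^2)) x)
        ≤ -α * (∫ x in (0:ℝ)..L, (v x)^2)
          - β * (∫ x in (0:ℝ)..L, (deriv (deriv v) x)^2)
          + C * (⨆ x : Set.Icc (0:ℝ) L, |h x|)^4 * (∫ x in (0:ℝ)..L, (v x)^2)
          + C * ∫ x in (0:ℝ)..L, (h x)^4 := by
  have hκ : 0 < (π / L) ^ 2 := by positivity
  have hκν : 0 < (π / L) ^ 2 + ν := by rw [div_pow]; linarith [neg_div (L ^ 2) (π ^ 2)]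
  set θ := min 1 (((π / L) ^ 2 + ν) / (π / L) ^ 2)
  have hθ0 : 0 < θ := lt_min one_pos (div_pos hκν hκ)
  have hθν : θ * (π / L) ^ 2 ≤ (π / L) ^ 2 + ν :=
    (mul_le_mul_of_nonneg_right (min_le_right _ _) hκ.le).trans_eq (div_mul_cancel₀ _ hκ.ne')
  refine ⟨θ * (π / L) ^ 2 / (4 * L ^ 2), by positivity, θ / 4, by positivity,
    256 / θ ^ 3 + 4 / θ, by positivity, ?_⟩
  intro v hv hmean h1a h1b h3a h3b h hh ha hb
  have hlin := two_mul_integral_mul_neg_deriv4_add_mul_deriv2_le hL hθ0.le (min_le_left _ _)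
    (by rwa [sub_zero]) hv hmean h1a h1b h3a h3b
  rw [sub_zero] at hlin
  have hnonlin := neg_two_mul_integral_mul_deriv_deriv_sq_deriv_add_le hL.le hθ0
    (hv.of_le (by norm_num)) hh h1a h1b ha hb
    fun x hx => abs_le_iSup_abs_of_mem_Icc hh.continuous.continuousOn hx
  have hA : 0 ≤ ∫ x in (0:ℝ)..L, v x ^ 2 :=
    intervalIntegral.integral_nonneg hL.le fun x _ => by positivity
  have hE : 0 ≤ ∫ x in (0:ℝ)..L, h x ^ 4 :=
    intervalIntegral.integral_nonneg hL.le fun x _ => by positivity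
  have hM : 0 ≤ (⨆ x : Set.Icc (0:ℝ) L, |h x|) ^ 4 := by positivity
  linarith [mul_nonneg (mul_nonneg (by positivity : (0:ℝ) ≤ 4 / θ) hM) hA,
    mul_nonneg (by positivity : (0:ℝ) ≤ 256 / θ ^ 3) hE]
end

section
/- Let L > 0 and ν > −π²/L². Then there exists α > 0 such that for every four times continuously differentiable v : [0, L] → ℝ with ∫₀^L v(x) dx = 0, v'(0) = v'(L) = 0 and v'''(0) = v'''(L) = 0, one has ∫₀^L v·(−v'''' + ν v'') dx ≤ −α ∫₀^L v² dx. -/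
/-!
Integrating by parts twice (the boundary terms vanish because `v'` and `v'''` vanish at the
ends), the quadratic form equals `-∫ v''² - ν ∫ v'²`. Two Poincaré inequalities with the sharp
constant `(π / L)²`, namely `(π/L)² ∫ v² ≤ ∫ v'²` (as `v` has mean zero) and
`(π/L)² ∫ v'² ≤ ∫ v''²` (as `v'` vanishes at both ends), bound it by
`-((π/L)² + ν) ∫ v'² ≤ -(π/L)² ((π/L)² + ν) ∫ v²`.

Both Poincaré inequalities are Wirtinger's inequality for periodic functions (Parseval together
with `c_n(f') = 2πin/T · c_n(f)`) on `[0, 2L]`, applied to the even extension of `v` and to the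
odd extension of `v'`; the conditions `v'(0) = v'(L) = 0` make these extensions `C¹` and periodic.
-/

open Real MeasureTheory Set intervalIntegral
open scoped Interval

theorem memLp_two_restrict_Ioc_of_continuousOn {E : Type*} [NormedAddCommGroup E] {a b : ℝ}
    {g : ℝ → E} (hab : a ≤ b) (hg : ContinuousOn g [[a, b]]) :
    MemLp g 2 (volume.restrict (Ioc a b)) := by
  rw [uIcc_of_le hab] at hg
  refine (memLp_two_iff_integrable_sq_norm
    ((hg.mono Ioc_subset_Icc_self).aestronglyMeasurable measurableSet_Ioc)).2 ?_
  exact (hg.norm.pow 2).integrableOn_Icc.mono_set Ioc_subset_Icc_self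

open Complex in
theorem mul_norm_fourierCoeffOn_le_norm_fourierCoeffOn_deriv {a b : ℝ} (hab : a < b)
    {F F' : ℝ → ℂ} (hF : ∀ x ∈ [[a, b]], HasDerivAt F (F' x) x)
    (hF' : IntervalIntegrable F' volume a b) (hper : F a = F b) (hmean : ∫ x in a..b, F x = 0)
    (n : ℤ) :
    2 * π / (b - a) * ‖fourierCoeffOn hab F n‖ ≤ ‖fourierCoeffOn hab F' n‖ := by
  rcases eq_or_ne n 0 with rfl | hn
  · have h₀ : fourierCoeffOn hab F 0 = 0 := by simp [fourierCoeffOn_eq_integral, hmean]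
    rw [h₀, norm_zero, mul_zero]
    exact norm_nonneg _
  rw [fourierCoeffOn_of_hasDerivAt hab hn hF hF', hper, sub_self, mul_zero, zero_sub]
  have hn₁ : (1 : ℝ) ≤ |(n : ℝ)| := by exact_mod_cast Int.one_le_abs hn
  have hnorm : ‖(-2 * π * I * n : ℂ)‖ = 2 * π * |(n : ℝ)| := by simp [abs_of_pos pi_pos]
  have hab' : b - a ≠ 0 := (sub_pos.2 hab).ne'
  have hba : ‖(b : ℂ) - a‖ = b - a := by
    rw [← ofReal_sub, norm_real, Real.norm_of_nonneg (sub_pos.2 hab).le]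
  rw [norm_mul, norm_neg, norm_mul, norm_div, norm_one, hnorm, hba]
  calc 2 * π / (b - a) * (1 / (2 * π * |(n : ℝ)|) * ((b - a) * ‖fourierCoeffOn hab F' n‖))
      = ‖fourierCoeffOn hab F' n‖ / |(n : ℝ)| := by field_simp
    _ ≤ ‖fourierCoeffOn hab F' n‖ := div_le_self (norm_nonneg _) hn₁

/-- Wirtinger's inequality. -/
theorem mul_integral_sq_le_integral_deriv_sq_of_periodic {a b : ℝ} (hab : a < b)
    {f f' : ℝ → ℝ} (hf : ∀ x ∈ [[a, b]], HasDerivAt f (f' x) x) (hf' : ContinuousOn f' [[a, b]])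
    (hper : f a = f b) (hmean : ∫ x in a..b, f x = 0) :
    (2 * π / (b - a)) ^ 2 * ∫ x in a..b, f x ^ 2 ≤ ∫ x in a..b, f' x ^ 2 := by
  set F : ℝ → ℂ := fun x => f x
  set F' : ℝ → ℂ := fun x => f' x
  have hF : ∀ x ∈ [[a, b]], HasDerivAt F (F' x) x := fun x hx => (hf x hx).ofReal_comp
  have hF'c : ContinuousOn F' [[a, b]] := Complex.continuous_ofReal.comp_continuousOn hf'
  have hFc : ContinuousOn F [[a, b]] := fun x hx => (hF x hx).continuousAt.continuousWithinAt
  have hcoeff := mul_norm_fourierCoeffOn_le_norm_fourierCoeffOn_deriv hab hF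
    hF'c.intervalIntegrable (by simp [F, hper]) (by simp [F, integral_ofReal, hmean])
  have hsum := hasSum_le (fun n => by rw [← mul_pow]; gcongr; exact hcoeff n)
    ((hasSum_sq_fourierCoeffOn hab (memLp_two_restrict_Ioc_of_continuousOn hab.le hFc)).mul_left
      ((2 * π / (b - a)) ^ 2))
    (hasSum_sq_fourierCoeffOn hab (memLp_two_restrict_Ioc_of_continuousOn hab.le hF'c))
  simp only [F, F', Complex.norm_real, Real.norm_eq_abs, sq_abs, smul_eq_mul] at hsum
  rwa [mul_left_comm, mul_le_mul_iff_right₀ (inv_pos.2 (sub_pos.2 hab))] at hsum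

theorem hasDerivAt_ite_le {f g f' g' : ℝ → ℝ} {c : ℝ} (hf : ∀ x, HasDerivAt f (f' x) x)
    (hg : ∀ x, HasDerivAt g (g' x) x) (hc : f c = g c) (hc' : f' c = g' c) (x : ℝ) :
    HasDerivAt (fun y => if y ≤ c then f y else g y) (if x ≤ c then f' x else g' x) x := by
  rcases lt_trichotomy x c with hx | rfl | hx
  · rw [if_pos hx.le]
    refine (hf x).congr_of_eventuallyEq ?_
    filter_upwards [Iio_mem_nhds hx] with y hy using if_pos hy.le
  · rw [if_pos le_rfl, ← hasDerivWithinAt_univ, ← Iic_union_Ici]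
    have hl : HasDerivWithinAt (fun y => if y ≤ x then f y else g y) (f' x) (Iic x) x :=
      (hf x).hasDerivWithinAt.congr (fun y hy => if_pos hy) (if_pos le_rfl)
    have hr : HasDerivWithinAt (fun y => if y ≤ x then f y else g y) (f' x) (Ici x) x := by
      refine hc' ▸ (hg x).hasDerivWithinAt.congr (fun y hy => ?_) (by rw [if_pos le_rfl, hc])
      rcases (mem_Ici.1 hy).eq_or_lt with rfl | hy
      · rw [if_pos le_rfl, hc]
      · rw [if_neg (not_le.2 hy)]
    exact hl.union hr
  · rw [if_neg (not_le.2 hx)]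
    refine (hg x).congr_of_eventuallyEq ?_
    filter_upwards [Ioi_mem_nhds hx] with y hy using if_neg (not_le.2 hy)

/-- The extension of `f` past `c` by reflection: even for `s = 1`, odd for `s = -1`. -/
noncomputable def reflectExtend (c s : ℝ) (f : ℝ → ℝ) (x : ℝ) : ℝ :=
  if x ≤ c then f x else s * f (2 * c - x)

theorem hasDerivAt_reflectExtend {c s : ℝ} {f f' : ℝ → ℝ} (hf : ∀ x, HasDerivAt f (f' x) x)
    (hc : f c = s * f c) (hc' : f' c = -s * f' c) (x : ℝ) :
    HasDerivAt (reflectExtend c s f) (reflectExtend c (-s) f' x) x := by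
  refine hasDerivAt_ite_le (g := fun y => s * f (2 * c - y)) (g' := fun y => -s * f' (2 * c - y))
    hf (fun y => ?_) (by rwa [two_mul, add_sub_cancel_right])
    (by rwa [two_mul, add_sub_cancel_right]) x
  simpa [neg_mul, mul_neg] using ((hf (2 * c - y)).comp_const_sub (2 * c) y).const_mul s

theorem continuous_reflectExtend {c s : ℝ} {f : ℝ → ℝ} (hf : Continuous f)
    (hc : f c = s * f c) : Continuous (reflectExtend c s f) :=
  Continuous.if_le hf (continuous_const.mul (hf.comp (continuous_const.sub continuous_id)))
    continuous_id continuous_const (fun x hx => by rw [hx, two_mul, add_sub_cancel_right, ← hc])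

theorem integral_reflectExtend {c s : ℝ} {f : ℝ → ℝ} (hc₀ : 0 ≤ c) (hf : Continuous f)
    (hc : f c = s * f c) :
    ∫ x in (0)..(2 * c), reflectExtend c s f x = (1 + s) * ∫ x in (0)..c, f x := by
  have hint := (continuous_reflectExtend hf hc).intervalIntegrable (μ := volume)
  rw [← integral_add_adjacent_intervals (hint 0 c) (hint c (2 * c))]
  have h₁ : ∫ x in (0)..c, reflectExtend c s f x = ∫ x in (0)..c, f x :=
    integral_congr fun x hx => if_pos (by rw [uIcc_of_le hc₀] at hx; exact hx.2)
  have h₂ : ∫ x in c..(2 * c), reflectExtend c s f x = ∫ x in c..(2 * c), s * f (2 * c - x) := by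
    refine integral_congr_ae (ae_of_all _ fun x hx => if_neg ?_)
    rw [uIoc_of_le (by linarith)] at hx
    exact not_le.2 hx.1
  rw [h₁, h₂, intervalIntegral.integral_const_mul, intervalIntegral.integral_comp_sub_left]
  simp only [sub_self, two_mul, add_sub_cancel_right]
  ring

theorem integral_reflectExtend_sq {c s : ℝ} {f : ℝ → ℝ} (hc₀ : 0 ≤ c) (hf : Continuous f)
    (hs : s ^ 2 = 1) :
    ∫ x in (0)..(2 * c), reflectExtend c s f x ^ 2 = 2 * ∫ x in (0)..c, f x ^ 2 := by
  have hsq : (fun x => reflectExtend c s f x ^ 2) = reflectExtend c 1 (fun x => f x ^ 2) := by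
    funext x
    simp only [reflectExtend]
    split_ifs
    · rfl
    · rw [one_mul, mul_pow, hs, one_mul]
  rw [hsq, integral_reflectExtend (f := fun x => f x ^ 2) hc₀ (hf.pow 2) (one_mul _).symm]
  norm_num

theorem mul_integral_sq_le_integral_deriv_sq_of_reflectExtend {L s : ℝ} (hL : 0 < L)
    (hs : s ^ 2 = 1) {f f' : ℝ → ℝ} (hf : ∀ x, HasDerivAt f (f' x) x) (hf' : Continuous f')
    (hc : f L = s * f L) (hc' : f' L = -s * f' L) (h₀ : f 0 = s * f 0)
    (hmean : (1 + s) * ∫ x in (0)..L, f x = 0) :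
    (π / L) ^ 2 * ∫ x in (0)..L, f x ^ 2 ≤ ∫ x in (0)..L, f' x ^ 2 := by
  have hfc : Continuous f := continuous_iff_continuousAt.2 fun x => (hf x).continuousAt
  have hper : reflectExtend L s f 0 = reflectExtend L s f (2 * L) := by
    rw [reflectExtend, reflectExtend, if_pos hL.le, if_neg (by linarith), sub_self, ← h₀]
  have hW := mul_integral_sq_le_integral_deriv_sq_of_periodic (by linarith : (0 : ℝ) < 2 * L)
    (fun x _ => hasDerivAt_reflectExtend hf hc hc' x)
    (continuous_reflectExtend hf' hc').continuousOn hper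
    (by rw [integral_reflectExtend hL.le hfc hc, hmean])
  rw [integral_reflectExtend_sq hL.le hfc hs, integral_reflectExtend_sq hL.le hf' (by rwa [neg_sq]),
    show 2 * π / (2 * L - 0) = π / L by field_simp; ring] at hW
  linarith

theorem mul_integral_sq_le_integral_deriv_sq_of_integral_eq_zero {L : ℝ} (hL : 0 < L)
    {f f' : ℝ → ℝ} (hf : ∀ x, HasDerivAt f (f' x) x) (hf' : Continuous f') (hL' : f' L = 0)
    (hmean : ∫ x in (0)..L, f x = 0) :
    (π / L) ^ 2 * ∫ x in (0)..L, f x ^ 2 ≤ ∫ x in (0)..L, f' x ^ 2 :=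
  mul_integral_sq_le_integral_deriv_sq_of_reflectExtend hL (one_pow 2) hf hf' (one_mul _).symm
    (by rw [hL']; ring) (one_mul _).symm (by rw [hmean, mul_zero])

theorem mul_integral_sq_le_integral_deriv_sq_of_eq_zero {L : ℝ} (hL : 0 < L)
    {f f' : ℝ → ℝ} (hf : ∀ x, HasDerivAt f (f' x) x) (hf' : Continuous f') (h₀ : f 0 = 0)
    (hL' : f L = 0) :
    (π / L) ^ 2 * ∫ x in (0)..L, f x ^ 2 ≤ ∫ x in (0)..L, f' x ^ 2 :=
  mul_integral_sq_le_integral_deriv_sq_of_reflectExtend (s := -1) hL (by norm_num) hf hf'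
    (by rw [hL']; ring) (by ring) (by rw [h₀]; ring) (by ring)

theorem integral_mul_neg_fourth_deriv_add_second_deriv {a b ν : ℝ} {f f₁ f₂ f₃ f₄ : ℝ → ℝ}
    (hf : ∀ x ∈ [[a, b]], HasDerivAt f (f₁ x) x) (hf₁ : ∀ x ∈ [[a, b]], HasDerivAt f₁ (f₂ x) x)
    (hf₂ : ∀ x ∈ [[a, b]], HasDerivAt f₂ (f₃ x) x) (hf₃ : ∀ x ∈ [[a, b]], HasDerivAt f₃ (f₄ x) x)
    (hf₄ : IntervalIntegrable f₄ volume a b) (h₁a : f₁ a = 0) (h₁b : f₁ b = 0) (h₃a : f₃ a = 0)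
    (h₃b : f₃ b = 0) :
    ∫ x in a..b, f x * (-f₄ x + ν * f₂ x) =
      -(∫ x in a..b, f₂ x ^ 2) - ν * ∫ x in a..b, f₁ x ^ 2 := by
  have hcont : ∀ {g g' : ℝ → ℝ}, (∀ x ∈ [[a, b]], HasDerivAt g (g' x) x) →
      ContinuousOn g [[a, b]] := fun h x hx => (h x hx).continuousAt.continuousWithinAt
  have hint : ∀ {g g' : ℝ → ℝ}, (∀ x ∈ [[a, b]], HasDerivAt g (g' x) x) →
      IntervalIntegrable g volume a b := fun h => (hcont h).intervalIntegrable
  have e₄ := integral_mul_deriv_eq_deriv_mul hf hf₃ (hint hf₁) hf₄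
  have e₃ := integral_mul_deriv_eq_deriv_mul hf₁ hf₂ (hint hf₂) (hint hf₃)
  have e₂ := integral_mul_deriv_eq_deriv_mul hf hf₁ (hint hf₁) (hint hf₂)
  simp only [h₁a, h₁b, h₃a, h₃b, mul_zero, zero_mul, sub_zero, zero_sub] at e₄ e₃ e₂
  simp_rw [mul_add, mul_neg, mul_left_comm (f _) ν]
  rw [integral_add (f := fun x => -(f x * f₄ x)) (hf₄.continuousOn_mul (hcont hf)).neg
    (((hint hf₂).continuousOn_mul (hcont hf)).const_mul ν), intervalIntegral.integral_neg,
    intervalIntegral.integral_const_mul, e₄, e₃, e₂]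
  simp only [← sq]
  ring

/-- Strict negativity of `A = -∂ₓ⁴ + ν ∂ₓ²` on zero-mean functions with Neumann boundary
conditions in the stable case `ν > -π²/L²`: there is `α > 0` with
`∫₀^L v (-v'''' + ν v'') ≤ -α ∫₀^L v²`. -/
theorem stmt15 (L : ℝ) (hL : 0 < L) (ν : ℝ) (hν : -π^2 / L^2 < ν) :
    ∃ α > (0:ℝ),
      ∀ v : ℝ → ℝ, ContDiff ℝ 4 v → (∫ x in (0:ℝ)..L, v x) = 0 →
        deriv v 0 = 0 → deriv v L = 0 →
        deriv (deriv (deriv v)) 0 = 0 → deriv (deriv (deriv v)) L = 0 →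
        (∫ x in (0:ℝ)..L,
            v x * (-(deriv (deriv (deriv (deriv v))) x) + ν * deriv (deriv v) x))
          ≤ -α * ∫ x in (0:ℝ)..L, (v x)^2 := by
  have hν' : 0 < (π / L) ^ 2 + ν := by rw [div_pow]; linarith [neg_div (L ^ 2) (π ^ 2)]
  refine ⟨(π / L) ^ 2 * ((π / L) ^ 2 + ν), by positivity, ?_⟩
  intro v hv hmean h₁0 h₁L h₃0 h₃L
  have hv₁ : ContDiff ℝ 3 (deriv v) := hv.deriv'
  have hv₂ : ContDiff ℝ 2 (deriv (deriv v)) := hv₁.deriv'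
  have hv₃ : ContDiff ℝ 1 (deriv (deriv (deriv v))) := hv₂.deriv'
  have hd : ∀ {n : WithTop ℕ∞} {g : ℝ → ℝ}, ContDiff ℝ n g → n ≠ 0 →
      ∀ x, HasDerivAt g (deriv g x) x := fun hg hn x => (hg.differentiable hn x).hasDerivAt
  rw [integral_mul_neg_fourth_deriv_add_second_deriv (fun x _ => hd hv (by norm_num) x)
    (fun x _ => hd hv₁ (by norm_num) x) (fun x _ => hd hv₂ (by norm_num) x)
    (fun x _ => hd hv₃ one_ne_zero x) ((hv₃.continuous_deriv le_rfl).intervalIntegrable _ _)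
    h₁0 h₁L h₃0 h₃L]
  have hv_le := mul_integral_sq_le_integral_deriv_sq_of_integral_eq_zero hL
    (hd hv (by norm_num)) hv₁.continuous h₁L hmean
  have hv₁_le := mul_integral_sq_le_integral_deriv_sq_of_eq_zero hL
    (hd hv₁ (by norm_num)) hv₂.continuous h₁0 h₁L
  calc -(∫ x in (0)..L, deriv (deriv v) x ^ 2) - ν * ∫ x in (0)..L, deriv v x ^ 2
      ≤ -((π / L) ^ 2 + ν) * ∫ x in (0)..L, deriv v x ^ 2 := by linarith
    _ ≤ -((π / L) ^ 2 + ν) * ((π / L) ^ 2 * ∫ x in (0)..L, v x ^ 2) :=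
      mul_le_mul_of_nonpos_left hv_le (by linarith)
    _ = _ := by ring
end
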